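/- arXiv:math/0406340 — 13 statements merged into one kernel-verified Lean document; each statement's English description precedes it below -/
import Mathlib

section
/- The Catalan number C_n = binom(2n, n)/(n+1) is odd if and only if n+1 is a power of 2. -/
open Finset

lemma cast_zmod_two_eq_one {a : ℕ} : (a : ZMod 2) = 1 ↔ a % 2 = 1 := by
  rw [← ZMod.natCast_mod a 2]
  rcases Nat.mod_two_eq_zero_or_one a with h | h <;> simp [h]

lemma sym_sum_odd (m : ℕ) (f : ℕ → ZMod 2) (hf : ∀ i ≤ 2*m+1, f i = f (2*m+1 - i)) :
    ∑ i ∈ range (2*m+2), f i = 0 := by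
  have h1 : ∑ i ∈ Ico 0 (m+1), f i + ∑ i ∈ Ico (m+1) (2*m+2), f i
      = ∑ i ∈ range (2*m+2), f i := by
    rw [sum_Ico_consecutive f (by omega) (by omega), ← Nat.Ico_zero_eq_range]
  have h2 : ∑ i ∈ Ico (m+1) (2*m+2), f i = ∑ i ∈ Ico 0 (m+1), f i := by
    rw [sum_congr rfl (fun i hi => hf i (by simp at hi; omega))]
    have := sum_Ico_reflect f (m+1) (n := 2*m+1) (m := 2*m+2) (by omega)
    simpa [show 2*m+1 - m = m+1 by omega] using this
  rw [← h1, h2]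
  have : ∀ x : ZMod 2, x + x = 0 := by decide
  exact this _

lemma sym_sum_even (m : ℕ) (f : ℕ → ZMod 2) (hf : ∀ i ≤ 2*m, f i = f (2*m - i)) :
    ∑ i ∈ range (2*m+1), f i = f m := by
  have h1 : ∑ i ∈ Ico 0 (m+1), f i + ∑ i ∈ Ico (m+1) (2*m+1), f i
      = ∑ i ∈ range (2*m+1), f i := by
    rw [sum_Ico_consecutive f (by omega) (by omega), ← Nat.Ico_zero_eq_range]
  have h2 : ∑ i ∈ Ico (m+1) (2*m+1), f i = ∑ i ∈ Ico 0 m, f i := by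
    rw [sum_congr rfl (fun i hi => hf i (by simp at hi; omega))]
    have := sum_Ico_reflect f (m+1) (n := 2*m) (m := 2*m+1) (by omega)
    simpa [show 2*m - m = m by omega] using this
  rw [← h1, h2, Nat.Ico_zero_eq_range, sum_range_succ, Nat.Ico_zero_eq_range]
  have : ∀ x y : ZMod 2, x + y + x = y := by decide
  exact this _ _

lemma catalan_cast_one_iff : ∀ n : ℕ, ((catalan n : ZMod 2) = 1 ↔ ∃ k : ℕ, n + 1 = 2 ^ k) := by
  intro n
  induction n using Nat.strong_induction_on with
  | _ n ih =>
    match n with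
    | 0 => simp [catalan_zero]; exact ⟨0, rfl⟩
    | j + 1 =>
      have hc : (catalan (j+1) : ZMod 2)
          = ∑ i ∈ range (j+1), (catalan i : ZMod 2) * (catalan (j - i) : ZMod 2) := by
        rw [catalan_succ]
        push_cast
        exact Fin.sum_univ_eq_sum_range (fun i => (catalan i : ZMod 2) * (catalan (j - i) : ZMod 2)) (j+1)
      rcases Nat.even_or_odd j with hj | hj
      · -- j = 2m, catalan (j+1) ≡ catalan m
        obtain ⟨m, hm⟩ := hj
        replace hm : j = 2*m := by omega
        subst hm
        have key : ∑ i ∈ range (2*m+1), (catalan i : ZMod 2) * (catalan (2*m - i) : ZMod 2)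
            = (catalan m : ZMod 2) * (catalan (2*m - m) : ZMod 2) :=
          sym_sum_even m _ (fun i hi => by
            show (catalan i : ZMod 2) * (catalan (2*m - i) : ZMod 2)
              = (catalan (2*m - i) : ZMod 2) * (catalan (2*m - (2*m - i)) : ZMod 2)
            rw [show 2*m - (2*m - i) = i by omega, mul_comm])
        rw [hc, key, show 2*m - m = m by omega]
        have hx : ∀ x : ZMod 2, x * x = x := by decide
        rw [hx]
        rw [ih m (by omega)]
        constructor
        · rintro ⟨k, hk⟩
          exact ⟨k+1, by rw [pow_succ]; omega⟩
        · rintro ⟨k, hk⟩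
          match k with
          | 0 => omega
          | k+1 => exact ⟨k, by rw [pow_succ] at hk; omega⟩
      · -- j = 2m+1, catalan (j+1) even
        obtain ⟨m, hm⟩ := hj
        subst hm
        have key : ∑ i ∈ range (2*m+2), (catalan i : ZMod 2) * (catalan (2*m+1 - i) : ZMod 2)
            = 0 :=
          sym_sum_odd m _ (fun i hi => by
            show (catalan i : ZMod 2) * (catalan (2*m+1 - i) : ZMod 2)
              = (catalan (2*m+1 - i) : ZMod 2) * (catalan (2*m+1 - (2*m+1 - i)) : ZMod 2)
            rw [show 2*m+1 - (2*m+1 - i) = i by omega, mul_comm])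
        rw [show 2*m+1+1 = 2*m+2 by ring] at hc
        rw [hc, key]
        constructor
        · intro h; exact absurd h (by decide)
        · rintro ⟨k, hk⟩
          match k with
          | 0 => omega
          | k+1 => rw [pow_succ] at hk; omega

/-- The Catalan number `C n = (2n choose n)/(n+1)` is odd iff `n+1` is a power of `2`. -/
theorem catalan_odd_iff_pow_two (n : ℕ) :
    Odd (Nat.choose (2 * n) n / (n + 1)) ↔ ∃ k : ℕ, n + 1 = 2 ^ k := by
  have h : Nat.choose (2 * n) n / (n + 1) = catalan n := by
    rw [catalan_eq_centralBinom_div, Nat.centralBinom]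
  rw [h, Nat.odd_iff, ← cast_zmod_two_eq_one, catalan_cast_one_iff]
end

section
/- For all natural numbers n and k, C_n ≡ binom(2n+1, n) (mod 2), where C_n is the n-th Catalan number. -/
/-! Since `binom(2n+1, n) = (2n+1) C_n` and `2n+1` is odd, both sides have the parity of `C_n`. -/

theorem choose_two_mul_add_one_eq_mul_catalan (n : ℕ) :
    (2 * n + 1).choose n = (2 * n + 1) * catalan n := by
  refine Nat.eq_of_mul_eq_mul_left n.succ_pos ?_
  calc (n + 1) * (2 * n + 1).choose n
      = (2 * n + 1).choose (n + 1) * (n + 1) := by rw [Nat.choose_symm_half, mul_comm]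
    _ = (2 * n + 1) * ((n + 1) * catalan n) := by
        rw [← Nat.add_one_mul_choose_eq, succ_mul_catalan_eq_centralBinom,
          Nat.centralBinom_eq_two_mul_choose]
    _ = (n + 1) * ((2 * n + 1) * catalan n) := by ring

/-- `C n ≡ (2n+1 choose n) (mod 2)` where `C n = (2n choose n)/(n+1)` is the Catalan number. -/
theorem catalan_mod_two (n : ℕ) :
    Nat.choose (2 * n) n / (n + 1) % 2 = Nat.choose (2 * n + 1) n % 2 := by
  rw [← Nat.centralBinom_eq_two_mul_choose, ← catalan_eq_centralBinom_div,
    choose_two_mul_add_one_eq_mul_catalan, Nat.mul_mod, Nat.mul_add_mod]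
  simp
end

section
/- For all natural numbers i, j, n with 0 ≤ i, j < 2^(n+1), binom(2^(n+1)+i+j, 2j) ≡ binom(2^(n+1)-1-i+j, 2j) (mod 2). -/
lemma choose_mirror_aux (t : ℕ) : ∀ s k : ℕ, s < 2 ^ t → k < 2 ^ t →
    Nat.choose (s + k) k % 2 = Nat.choose (2 ^ t - 1 - s) k % 2 := by
  induction t with
  | zero =>
    intro s k hs hk
    simp at hs hk
    subst hs; subst hk; rfl
  | succ t ih =>
    intro s k hs hk
    have hP : 2 ^ (t + 1) = 2 * 2 ^ t := by ring
    have hpos : 0 < 2 ^ t := Nat.pow_pos (by norm_num)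
    have h1 := (Choose.choose_modEq_choose_mod_mul_choose_div_nat
      (p := 2) (n := s + k) (k := k))
    have h2 := (Choose.choose_modEq_choose_mod_mul_choose_div_nat
      (p := 2) (n := 2 ^ (t + 1) - 1 - s) (k := k))
    rw [Nat.ModEq] at h1 h2
    rw [h1, h2]
    have IH := ih (s / 2) (k / 2) (by omega) (by omega)
    rcases Nat.even_or_odd s with hse | hso <;> rcases Nat.even_or_odd k with hke | hko
    · -- s even, k even
      obtain ⟨a, ha⟩ := hse; obtain ⟨b, hb⟩ := hke
      have e1 : (s + k) % 2 = 0 := by omega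
      have e2 : k % 2 = 0 := by omega
      have e3 : (s + k) / 2 = s / 2 + k / 2 := by omega
      have e4 : (2 ^ (t + 1) - 1 - s) % 2 = 1 := by omega
      have e5 : (2 ^ (t + 1) - 1 - s) / 2 = 2 ^ t - 1 - s / 2 := by omega
      rw [e1, e2, e3, e4, e5]
      simpa using IH
    · -- s even, k odd
      obtain ⟨a, ha⟩ := hse; obtain ⟨b, hb⟩ := hko
      have e1 : (s + k) % 2 = 1 := by omega
      have e2 : k % 2 = 1 := by omega
      have e3 : (s + k) / 2 = s / 2 + k / 2 := by omega
      have e4 : (2 ^ (t + 1) - 1 - s) % 2 = 1 := by omega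
      have e5 : (2 ^ (t + 1) - 1 - s) / 2 = 2 ^ t - 1 - s / 2 := by omega
      rw [e1, e2, e3, e4, e5]
      simpa using IH
    · -- s odd, k even
      obtain ⟨a, ha⟩ := hso; obtain ⟨b, hb⟩ := hke
      have e1 : (s + k) % 2 = 1 := by omega
      have e2 : k % 2 = 0 := by omega
      have e3 : (s + k) / 2 = s / 2 + k / 2 := by omega
      have e4 : (2 ^ (t + 1) - 1 - s) % 2 = 0 := by omega
      have e5 : (2 ^ (t + 1) - 1 - s) / 2 = 2 ^ t - 1 - s / 2 := by omega
      rw [e1, e2, e3, e4, e5]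
      simpa using IH
    · -- s odd, k odd : both sides are even
      obtain ⟨a, ha⟩ := hso; obtain ⟨b, hb⟩ := hko
      have e1 : (s + k) % 2 = 0 := by omega
      have e2 : k % 2 = 1 := by omega
      have e4 : (2 ^ (t + 1) - 1 - s) % 2 = 0 := by omega
      rw [e1, e2, e4]
      simp

/-- For `i, j < 2^(n+1)`:
`binom(2^(n+1)+i+j, 2j) ≡ binom(2^(n+1)-1-i+j, 2j) (mod 2)`. -/
theorem choose_mirror_mod_two (n i j : ℕ) (hi : i < 2 ^ (n + 1)) (hj : j < 2 ^ (n + 1)) :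
    Nat.choose (2 ^ (n + 1) + i + j) (2 * j) % 2 =
      Nat.choose (2 ^ (n + 1) - 1 - i + j) (2 * j) % 2 := by
  have hP : 2 ^ (n + 2) = 2 * 2 ^ (n + 1) := by ring
  have h := choose_mirror_aux (n + 2) (2 ^ (n + 1) + i - j) (2 * j) (by omega) (by omega)
  have e1 : 2 ^ (n + 1) + i - j + 2 * j = 2 ^ (n + 1) + i + j := by omega
  have e2 : 2 ^ (n + 2) - 1 - (2 ^ (n + 1) + i - j) = 2 ^ (n + 1) - 1 - i + j := by omega
  rw [e1, e2] at h
  exact h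
end

section
/- For all natural numbers i, j, n with i, j < 2^(n+1), binom(2(i+2^(n+1))+1, i-j) ≡ binom(2i+1, i-j) (mod 2). -/
theorem Nat.choose_add_prime_pow_modEq {p : ℕ} [Fact p.Prime] (a : ℕ) {N k : ℕ}
    (hk : k < p ^ a) : (N + p ^ a).choose k ≡ N.choose k [MOD p] := by
  induction a generalizing N k with
  | zero => simp [Nat.lt_one_iff.mp (by simpa using hk), Nat.ModEq.refl]
  | succ a ih =>
    have hp : 0 < p := (Fact.out : p.Prime).pos
    have hmod : (N + p ^ (a + 1)) % p = N % p := by simp [pow_succ]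
    have hdiv : (N + p ^ (a + 1)) / p = N / p + p ^ a := by
      rw [pow_succ, Nat.add_mul_div_right _ _ hp]
    have hk' : k / p < p ^ a := Nat.div_lt_of_lt_mul (by rwa [mul_comm, ← pow_succ])
    calc (N + p ^ (a + 1)).choose k
        ≡ (N % p).choose (k % p) * (N / p + p ^ a).choose (k / p) [MOD p] := by
          rw [← hmod, ← hdiv]; exact Choose.choose_modEq_choose_mod_mul_choose_div_nat
      _ ≡ (N % p).choose (k % p) * (N / p).choose (k / p) [MOD p] := (ih hk').mul_left _
      _ ≡ N.choose k [MOD p] := Choose.choose_modEq_choose_mod_mul_choose_div_nat.symm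

theorem choose_shift_mod_two_general (n i j : ℕ) (hi : i < 2 ^ (n + 1)) :
    Nat.choose (2 * (i + 2 ^ (n + 1)) + 1) (i - j) % 2 =
      Nat.choose (2 * i + 1) (i - j) % 2 := by
  have hN : 2 * (i + 2 ^ (n + 1)) + 1 = (2 * i + 1) + 2 ^ (n + 2) := by ring
  rw [hN]
  exact Nat.choose_add_prime_pow_modEq (n + 2) (by rw [pow_succ]; omega)

/-- For `i, j < 2^(n+1)`:
`binom(2(i+2^(n+1))+1, i-j) ≡ binom(2i+1, i-j) (mod 2)` (truncated subtraction). -/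
theorem choose_shift_mod_two (n i j : ℕ) (hi : i < 2 ^ (n + 1)) (hj : j < 2 ^ (n + 1)) :
    Nat.choose (2 * (i + 2 ^ (n + 1)) + 1) (i - j) % 2 =
      Nat.choose (2 * i + 1) (i - j) % 2 :=
  choose_shift_mod_two_general n i j hi
end

section
/- For all natural numbers i, j, n with i, j < 2^(n+1): binom(2(2^(n+1)+i)+1, 2^(n+1)+i-j) ≡ binom(2(2^(n+1)+i)+1, (2^(n+1)+i) - (2^(n+2)-1-j)) (mod 2). -/
/-!
Write `N = 2 ^ (n + 1)`. The upper index is `2 * (N + i) + 1 = 2 ^ (n + 2) + (2 * i + 1)` with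
`2 * i + 1 < 2 ^ (n + 2)`, and both lower indices are below `2 ^ (n + 2)`, so by Lucas's theorem
the leading binary digit of the upper index can be dropped modulo 2. The two lower indices sum to
`2 * i + 1`, so the reduced binomial coefficients agree by the symmetry `C(r, m) = C(r, r - m)`,
which holds for every integer `m` once negative lower indices give `0`.
-/

/-- Binomial coefficient with an integer lower index, vanishing for negative lower index. -/
def chooseZ (n : ℕ) (m : ℤ) : ℤ := if m < 0 then 0 else (n.choose m.toNat : ℤ)

theorem Choose.choose_pow_add_modEq_choose {p k r b : ℕ} [Fact p.Prime]
    (hr : r < p ^ k) (hb : b < p ^ k) :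
    Nat.choose (p ^ k + r) b ≡ Nat.choose r b [ZMOD p] := by
  have hp : 0 < p := (Fact.out : p.Prime).pos
  induction k generalizing r b with
  | zero =>
    obtain rfl : r = 0 := by simpa using hr
    obtain rfl : b = 0 := by simpa using hb
    rfl
  | succ k ih =>
    rw [pow_succ'] at hr hb
    have hmod : (p ^ (k + 1) + r) % p = r % p := by simp [pow_succ, Nat.add_mod]
    have hdiv : (p ^ (k + 1) + r) / p = p ^ k + r / p := by
      rw [pow_succ, Nat.add_comm, Nat.add_mul_div_right _ _ hp, Nat.add_comm]
    calc Nat.choose (p ^ (k + 1) + r) b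
        ≡ Nat.choose (r % p) (b % p) * Nat.choose (p ^ k + r / p) (b / p) [ZMOD p] := by
          rw [← hmod, ← hdiv]; exact Choose.choose_modEq_choose_mod_mul_choose_div
      _ ≡ Nat.choose (r % p) (b % p) * Nat.choose (r / p) (b / p) [ZMOD p] :=
          (ih (Nat.div_lt_of_lt_mul hr) (Nat.div_lt_of_lt_mul hb)).mul_left _
      _ ≡ Nat.choose r b [ZMOD p] := Choose.choose_modEq_choose_mod_mul_choose_div.symm

theorem chooseZ_natCast (n k : ℕ) : chooseZ n k = n.choose k := by
  simp [chooseZ]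

theorem chooseZ_of_neg {n : ℕ} {m : ℤ} (hm : m < 0) : chooseZ n m = 0 := if_pos hm

theorem chooseZ_symm (n : ℕ) (m : ℤ) : chooseZ n (n - m) = chooseZ n m := by
  rcases lt_or_ge m 0 with hm | hm
  · lift n - m to ℕ using by omega with t ht
    rw [chooseZ_natCast, chooseZ_of_neg hm, Nat.choose_eq_zero_of_lt (by omega), Nat.cast_zero]
  lift m to ℕ using hm
  rcases le_or_gt m n with hmn | hmn
  · rw [← Nat.cast_sub hmn, chooseZ_natCast, chooseZ_natCast, Nat.choose_symm hmn]
  · rw [chooseZ_of_neg (by omega), chooseZ_natCast, Nat.choose_eq_zero_of_lt hmn, Nat.cast_zero]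

theorem chooseZ_pow_add_modEq {p k r : ℕ} [Fact p.Prime] {m : ℤ} (hr : r < p ^ k)
    (hm : m < p ^ k) :
    chooseZ (p ^ k + r) m ≡ chooseZ r m [ZMOD p] := by
  rcases lt_or_ge m 0 with hneg | hm₀
  · rw [chooseZ_of_neg hneg, chooseZ_of_neg hneg]
  lift m to ℕ using hm₀
  rw [chooseZ_natCast, chooseZ_natCast]
  exact Choose.choose_pow_add_modEq_choose hr (by exact_mod_cast hm)

/-- For `i, j < 2^(n+1)`:
`binom(2(2^(n+1)+i)+1, 2^(n+1)+i-j) ≡ binom(2(2^(n+1)+i)+1, (2^(n+1)+i)-(2^(n+2)-1-j)) (mod 2)`,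
the lower index being interpreted in `ℤ`. -/
theorem choose_vertical_mirror_mod_two (n i j : ℕ) (hi : i < 2 ^ (n + 1)) (hj : j < 2 ^ (n + 1)) :
    chooseZ (2 * (2 ^ (n + 1) + i) + 1) ((2 ^ (n + 1) + i : ℤ) - j) ≡
      chooseZ (2 * (2 ^ (n + 1) + i) + 1)
        ((2 ^ (n + 1) + i : ℤ) - (2 ^ (n + 2) - 1 - j)) [ZMOD 2] := by
  have : Fact (Nat.Prime 2) := ⟨Nat.prime_two⟩
  have htop : 2 * (2 ^ (n + 1) + i) + 1 = 2 ^ (n + 2) + (2 * i + 1) := by ring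
  have hr : 2 * i + 1 < 2 ^ (n + 2) := by rw [pow_succ]; omega
  have hi' : (i : ℤ) < 2 ^ (n + 1) := by exact_mod_cast hi
  have hj' : (j : ℤ) < 2 ^ (n + 1) := by exact_mod_cast hj
  rw [htop]
  calc chooseZ (2 ^ (n + 2) + (2 * i + 1)) ((2 ^ (n + 1) + i : ℤ) - j)
      ≡ chooseZ (2 * i + 1) ((2 ^ (n + 1) + i : ℤ) - j) [ZMOD 2] :=
        chooseZ_pow_add_modEq hr (by push_cast; linarith)
    _ = chooseZ (2 * i + 1) ((2 ^ (n + 1) + i : ℤ) - (2 ^ (n + 2) - 1 - j)) := by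
        rw [← chooseZ_symm]; congr 1; push_cast; ring
    _ ≡ chooseZ (2 ^ (n + 2) + (2 * i + 1)) ((2 ^ (n + 1) + i : ℤ) - (2 ^ (n + 2) - 1 - j))
        [ZMOD 2] := (chooseZ_pow_add_modEq hr (by push_cast; linarith)).symm
end

section
/- Define polynomials X_k = 1 + Σ_{j=1}^{k} Π_{i=1}^{j} x_i^{2^(j-i)} and X̃_k = 1 + Σ_{j=1}^{k-1} Π_{i=1}^{j} x_i^{2^(j-i)} - Π_{i=1}^{k} x_i^{2^(k-i)} in variables x_1, x_2, .... Then for all n ≥ 1: X_n + x_{n+1}(X_{n-1}^2 - X_n·X̃_n) = X_{n+1} and X_n - x_{n+1}(X_{n-1}^2 - X_n·X̃_n) = X̃_{n+1}. -/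
/-!
Write `P k = ∏_{i=1}^k x_i^{2^(k-i)}` for the `k`-th summand. Then `X_k = X_{k-1} + P_k`,
`X̃_k = X_{k-1} - P_k` and `P_{k+1} = x_{k+1} P_k²`. Hence `X_{n-1}² - X_n X̃_n` is a difference of
squares equal to `P_n²`, and multiplying by `x_{n+1}` gives `P_{n+1}`, the difference between
`X_n` and either of `X_{n+1}`, `X̃_{n+1}`.
-/

variable {R : Type*} [CommRing R]

/-- `X k = 1 + ∑_{j=1}^k ∏_{i=1}^j x_i^{2^(j-i)}`. -/
def Xpoly (x : ℕ → R) (k : ℕ) : R :=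
  1 + ∑ j ∈ Finset.Icc 1 k, ∏ i ∈ Finset.Icc 1 j, x i ^ 2 ^ (j - i)

/-- `X̃ k = 1 + ∑_{j=1}^{k-1} ∏_{i=1}^j x_i^{2^(j-i)} - ∏_{i=1}^k x_i^{2^(k-i)}`. -/
def Xtilde (x : ℕ → R) (k : ℕ) : R :=
  1 + ∑ j ∈ Finset.Icc 1 (k - 1), ∏ i ∈ Finset.Icc 1 j, x i ^ 2 ^ (j - i)
    - ∏ i ∈ Finset.Icc 1 k, x i ^ 2 ^ (k - i)

def Xterm (x : ℕ → R) (k : ℕ) : R := ∏ i ∈ Finset.Icc 1 k, x i ^ 2 ^ (k - i)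

@[simp]
lemma Xterm_zero (x : ℕ → R) : Xterm x 0 = 1 := by
  simp [Xterm]

@[simp]
lemma Xpoly_zero (x : ℕ → R) : Xpoly x 0 = 1 := by
  simp [Xpoly]

lemma Xterm_succ (x : ℕ → R) (k : ℕ) : Xterm x (k + 1) = x (k + 1) * Xterm x k ^ 2 := by
  have hsquare : ∏ i ∈ Finset.Icc 1 k, x i ^ 2 ^ (k + 1 - i) = Xterm x k ^ 2 := by
    rw [Xterm, ← Finset.prod_pow]
    refine Finset.prod_congr rfl fun i hi => ?_
    rw [← pow_mul, ← pow_succ, Nat.sub_add_comm (Finset.mem_Icc.mp hi).2]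
  rw [Xterm, Finset.prod_Icc_succ_top (Nat.le_add_left 1 k), Nat.sub_self, pow_zero, pow_one,
    hsquare, mul_comm]

lemma Xpoly_succ (x : ℕ → R) (k : ℕ) : Xpoly x (k + 1) = Xpoly x k + Xterm x (k + 1) := by
  rw [Xpoly, Xpoly, Finset.sum_Icc_succ_top (Nat.le_add_left 1 k), Xterm, add_assoc]

lemma Xtilde_eq_Xpoly_sub_Xterm (x : ℕ → R) (k : ℕ) :
    Xtilde x k = Xpoly x (k - 1) - Xterm x k :=
  rfl

lemma Xpoly_pred_sq_sub_Xpoly_mul_Xtilde (x : ℕ → R) (k : ℕ) :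
    Xpoly x (k - 1) ^ 2 - Xpoly x k * Xtilde x k = Xterm x k ^ 2 := by
  rw [Xtilde_eq_Xpoly_sub_Xterm]
  cases k with
  | zero => simp
  | succ m =>
    rw [Nat.add_sub_cancel, Xpoly_succ]
    ring

theorem Xpoly_rec_general (x : ℕ → R) (n : ℕ) :
    Xpoly x n + x (n + 1) * (Xpoly x (n - 1) ^ 2 - Xpoly x n * Xtilde x n) = Xpoly x (n + 1) ∧
    Xpoly x n - x (n + 1) * (Xpoly x (n - 1) ^ 2 - Xpoly x n * Xtilde x n) = Xtilde x (n + 1) := by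
  rw [Xpoly_pred_sq_sub_Xpoly_mul_Xtilde, ← Xterm_succ, Xtilde_eq_Xpoly_sub_Xterm,
    Nat.add_sub_cancel, Xpoly_succ]
  exact ⟨rfl, rfl⟩

/-- The identities `X_n ± x_{n+1}(X_{n-1}² - X_n X̃_n) = X_{n+1}, X̃_{n+1}`. -/
theorem Xpoly_rec (x : ℕ → R) (n : ℕ) (hn : 1 ≤ n) :
    Xpoly x n + x (n + 1) * (Xpoly x (n - 1) ^ 2 - Xpoly x n * Xtilde x n) = Xpoly x (n + 1) ∧
    Xpoly x n - x (n + 1) * (Xpoly x (n - 1) ^ 2 - Xpoly x n * Xtilde x n) = Xtilde x (n + 1) :=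
  Xpoly_rec_general x n
end

section
/- Define a sequence s: ℕ → {±1} by s_0 = 1, s_{2i} = (-1)^i s_i for i ≥ 1, and s_{2i+1} = s_i. Then s_n = (-1)^{B_0(n)} where B_0(n) is the number of occurrences of the block '10' in the binary expansion of n. -/
private def Tset (n : ℕ) : Finset ℕ :=
  (Finset.range n).filter (fun i => n.testBit i = false ∧ n.testBit (i + 1) = true)

private lemma mem_Tset {n j : ℕ} :
    j ∈ Tset n ↔ n.testBit j = false ∧ n.testBit (j + 1) = true := by
  unfold Tset
  simp only [Finset.mem_filter, Finset.mem_range]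
  constructor
  · tauto
  · intro h
    refine ⟨?_, h⟩
    have h1 := Nat.ge_two_pow_of_testBit h.2
    have h2 : j < 2 ^ j := Nat.lt_two_pow_self (n := j)
    have h3 : 2 ^ j ≤ 2 ^ (j + 1) := Nat.pow_le_pow_right (by norm_num) (by omega)
    omega

private lemma Tset_odd (i : ℕ) : Tset (2 * i + 1) = (Tset i).image (· + 1) := by
  have hdiv : (2 * i + 1) / 2 = i := by omega
  ext j
  simp only [mem_Tset, Finset.mem_image, mem_Tset]
  cases j with
  | zero =>
    have h0' : (2 * i + 1).testBit 0 = true := by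
      simp [Nat.testBit_zero]
    simp [h0']
  | succ k =>
    simp only [Nat.testBit_succ, hdiv]
    constructor
    · intro h; exact ⟨k, h, rfl⟩
    · rintro ⟨a, ha, hak⟩
      obtain rfl : a = k := by omega
      exact ha

private lemma Tset_even (i : ℕ) :
    Tset (2 * i) = if i % 2 = 1 then insert 0 ((Tset i).image (· + 1))
      else (Tset i).image (· + 1) := by
  have hdiv : (2 * i) / 2 = i := by omega
  have hbit0 : (2 * i).testBit 0 = false := by
    simp [Nat.testBit_zero]
  have hbit1 : (2 * i).testBit 1 = i.testBit 0 := by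
    rw [show (1:ℕ) = 0 + 1 from rfl, Nat.testBit_succ, hdiv]
  have hibit0 : i.testBit 0 = decide (i % 2 = 1) := Nat.testBit_zero i
  ext j
  cases j with
  | zero =>
    by_cases hi : i % 2 = 1 <;>
      simp [mem_Tset, hbit0, hbit1, hibit0, hi, Finset.mem_image]
  | succ k =>
    have h1 : (2 * i).testBit (k + 1) = i.testBit k := by rw [Nat.testBit_succ, hdiv]
    have h2 : (2 * i).testBit (k + 2) = i.testBit (k + 1) := by
      rw [Nat.testBit_succ, hdiv]
    have hmain : k + 1 ∈ Tset (2 * i) ↔ k + 1 ∈ (Tset i).image (· + 1) := by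
      simp only [mem_Tset, Finset.mem_image, mem_Tset, h1, h2]
      constructor
      · intro h; exact ⟨k, h, rfl⟩
      · rintro ⟨a, ha, hak⟩
        obtain rfl : a = k := by omega
        exact ha
    by_cases hi : i % 2 = 1
    · simp only [hi, if_true, Finset.mem_insert, Nat.succ_ne_zero, false_or, hmain]
    · simp only [hi, if_false, hmain]

private lemma card_Tset_odd (i : ℕ) : (Tset (2 * i + 1)).card = (Tset i).card := by
  rw [Tset_odd, Finset.card_image_of_injective _ (fun a b h => by omega)]

private lemma card_Tset_even (i : ℕ) :
    (Tset (2 * i)).card = (Tset i).card + i % 2 := by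
  rw [Tset_even]
  by_cases hi : i % 2 = 1 <;> simp only [hi, if_true, if_false]
  · rw [Finset.card_insert_of_notMem (by simp [Finset.mem_image]),
      Finset.card_image_of_injective _ (fun a b h => by omega)]
  · rw [Finset.card_image_of_injective _ (fun a b h => by omega)]
    omega

/-- If `s 0 = 1`, `s (2i) = (-1)^i s i` for `i ≥ 1` and `s (2i+1) = s i`, then
`s n = (-1)^(B₀ n)` where `B₀ n` counts the occurrences of the block `10` in the binary
expansion of `n`, i.e. the indices `i` with bit `i` of `n` equal to `0` and bit `i+1` equal
to `1`. -/
theorem s_eq_neg_one_pow_B0 (s : ℕ → ℤ) (h0 : s 0 = 1)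
    (heven : ∀ i, 1 ≤ i → s (2 * i) = (-1) ^ i * s i)
    (hodd : ∀ i, s (2 * i + 1) = s i) (n : ℕ) :
    s n = (-1) ^ ((Finset.range n).filter
      (fun i => n.testBit i = false ∧ n.testBit (i + 1) = true)).card := by
  show s n = (-1) ^ (Tset n).card
  induction n using Nat.strong_induction_on with
  | _ n ih =>
    match n, ih with
    | 0, _ => simp [Tset, h0]
    | n + 1, ih =>
      rcases Nat.even_or_odd (n + 1) with ⟨i, hi⟩ | ⟨i, hi⟩
      · have hi' : n + 1 = 2 * i := by omega
        have hipos : 1 ≤ i := by omega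
        rw [hi', heven i hipos, ih i (by omega), card_Tset_even]
        have hp : ((-1 : ℤ)) ^ (i % 2) = (-1) ^ i := by
          rcases Nat.even_or_odd i with he | ho
          · rw [Nat.even_iff.mp he, he.neg_one_pow, pow_zero]
          · rw [Nat.odd_iff.mp ho, ho.neg_one_pow, pow_one]
        rw [pow_add, hp]; ring
      · have hi' : n + 1 = 2 * i + 1 := by omega
        rw [hi', hodd i, card_Tset_odd, ih i (by omega)]
end

section
/- With s defined by s_0 = 1, s_{2i} = (-1)^i s_i, s_{2i+1} = s_i, one has s_{2^(n+1)+n} = -s_n for every natural number n ≥ 1 with n < 2^n. -/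
/-!
Writing `2 ^ (k + 2) + m` as `2 * (2 ^ (k + 1) + i) + r` with `m = 2 * i + r` and `r ∈ {0, 1}`, the
recursion reduces `s (2 ^ (k + 2) + m)` to `s (2 ^ (k + 1) + i)`; the extra sign `(-1) ^ (2 ^ (k + 1))`
in the even case is `1`. So by induction on `k`, `s (2 ^ (k + 1) + m) = -s m` for all `m < 2 ^ k`,
starting from `s 2 = -s 1 = -s 0`. The theorem is the case `k = m = n`.
-/

section

variable {s : ℕ → ℤ}

theorem apply_two_mul_of_one_le (heven : ∀ i, 1 ≤ i → s (2 * i) = (-1) ^ i * s i) (i : ℕ) :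
    s (2 * i) = (-1) ^ i * s i := by
  rcases Nat.eq_zero_or_pos i with rfl | hi
  · simp
  · exact heven i hi

theorem neg_one_pow_two_pow_succ_add (k i : ℕ) : (-1 : ℤ) ^ (2 ^ (k + 1) + i) = (-1) ^ i := by
  rw [pow_add, (Nat.even_pow.mpr ⟨even_two, k.succ_ne_zero⟩).neg_one_pow, one_mul]

theorem apply_two_pow_succ_add (heven : ∀ i, s (2 * i) = (-1) ^ i * s i)
    (hodd : ∀ i, s (2 * i + 1) = s i) : ∀ k m, m < 2 ^ k → s (2 ^ (k + 1) + m) = -s m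
  | 0, 0, _ => by simpa [hodd 0] using heven 1
  | k + 1, m, hm => by
    obtain ⟨i, rfl | rfl⟩ := Nat.even_or_odd' m
    · have hi : i < 2 ^ k := by rw [pow_succ] at hm; omega
      calc s (2 ^ (k + 1 + 1) + 2 * i)
          = (-1) ^ (2 ^ (k + 1) + i) * s (2 ^ (k + 1) + i) := by
            rw [← heven, pow_succ 2 (k + 1)]; ring_nf
        _ = -s (2 * i) := by
            rw [neg_one_pow_two_pow_succ_add, apply_two_pow_succ_add heven hodd k i hi, heven]
            ring
    · have hi : i < 2 ^ k := by rw [pow_succ] at hm; omega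
      calc s (2 ^ (k + 1 + 1) + (2 * i + 1))
          = s (2 * (2 ^ (k + 1) + i) + 1) := by rw [pow_succ 2 (k + 1)]; ring_nf
        _ = -s (2 * i + 1) := by rw [hodd, hodd, apply_two_pow_succ_add heven hodd k i hi]

end

theorem s_two_pow_add_general (s : ℕ → ℤ)
    (heven : ∀ i, 1 ≤ i → s (2 * i) = (-1) ^ i * s i)
    (hodd : ∀ i, s (2 * i + 1) = s i) (n : ℕ) (h : n < 2 ^ n) :
    s (2 ^ (n + 1) + n) = -s n :=
  apply_two_pow_succ_add (apply_two_mul_of_one_le heven) hodd n n h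

/-- If `s 0 = 1`, `s (2i) = (-1)^i s i` for `i ≥ 1` and `s (2i+1) = s i`, then
`s (2^(n+1) + n) = -s n` for every `n ≥ 1` with `n < 2^n`. -/
theorem s_two_pow_add (s : ℕ → ℤ) (h0 : s 0 = 1)
    (heven : ∀ i, 1 ≤ i → s (2 * i) = (-1) ^ i * s i)
    (hodd : ∀ i, s (2 * i + 1) = s i) (n : ℕ) (hn : 1 ≤ n) (h : n < 2 ^ n) :
    s (2 ^ (n + 1) + n) = -s n :=
  s_two_pow_add_general s heven hodd n h
end

section
/- Let L(k) be the k×k lower-triangular 0/1-matrix with entries l_{i,j} = binom(2i+1, i-j) mod 2 for 0 ≤ j ≤ i < k (and 0 for j > i). Then for every n ≥ 0, L(2^(n+2)) has the block form [[A,0,0,0],[B,A,0,0],[0,B,A,0],[B,A,B,A]], where A and B are the 2^n × 2^n blocks such that L(2^(n+1)) = [[A,0],[B,A]]. -/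
/-- Lucas-type splitting of binomial coefficients mod 2 across powers of 2. -/
lemma lucas_pow2 : ∀ m c d u v : ℕ, u < 2 ^ m → v < 2 ^ m →
    Nat.choose (c * 2 ^ m + u) (d * 2 ^ m + v) ≡ Nat.choose c d * Nat.choose u v [MOD 2] := by
  intro m
  induction m with
  | zero =>
    intro c d u v hu hv
    interval_cases u
    interval_cases v
    simp [Nat.ModEq]
  | succ m ih =>
    intro c d u v hu hv
    haveI : Fact (Nat.Prime 2) := ⟨Nat.prime_two⟩
    have h1 := Choose.choose_modEq_choose_mod_mul_choose_div_nat (p := 2)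
      (n := c * 2 ^ (m+1) + u) (k := d * 2 ^ (m+1) + v)
    have h2 := Choose.choose_modEq_choose_mod_mul_choose_div_nat (p := 2) (n := u) (k := v)
    have hkey : ∀ x y : ℕ, (x * 2 ^ (m+1) + y) % 2 = y % 2 ∧
        (x * 2 ^ (m+1) + y) / 2 = x * 2 ^ m + y / 2 := by
      intro x y
      have h : x * 2 ^ (m+1) = 2 * (x * 2 ^ m) := by ring
      omega
    rw [(hkey c u).1, (hkey c u).2, (hkey d v).1, (hkey d v).2] at h1
    have h3 := ih c d (u / 2) (v / 2) (by omega) (by omega)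
    calc Nat.choose (c * 2 ^ (m+1) + u) (d * 2 ^ (m+1) + v)
        ≡ Nat.choose (u % 2) (v % 2) * Nat.choose (c * 2 ^ m + u / 2) (d * 2 ^ m + v / 2) [MOD 2] := h1
      _ ≡ Nat.choose (u % 2) (v % 2) * (Nat.choose c d * Nat.choose (u / 2) (v / 2)) [MOD 2] :=
          (Nat.ModEq.refl _).mul h3
      _ = Nat.choose c d * (Nat.choose (u % 2) (v % 2) * Nat.choose (u / 2) (v / 2)) := by ring
      _ ≡ Nat.choose c d * Nat.choose u v [MOD 2] := (Nat.ModEq.refl _).mul h2.symm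

/-- Block evaluation of binomial coefficients mod 2. -/
lemma ell_block (n M c e u r : ℕ) (hM : 2 ^ n = M) (hu : u < 2 * M) (hr : r < 2 * M) :
    (c * (2 * M) + u).choose (e * (2 * M) + r) % 2 = c.choose e % 2 * ((u.choose r) % 2) % 2 := by
  subst hM
  have hpow : 2 * 2 ^ n = 2 ^ (n + 1) := by ring
  rw [hpow] at hu hr ⊢
  have h := lucas_pow2 (n + 1) c e u r hu hr
  rw [Nat.ModEq] at h
  rw [h, Nat.mul_mod]

/-- Block evaluation when the block-level binomial coefficient is odd. -/
lemma entry1 (n M c e u r : ℕ) (hM : 2 ^ n = M) (hu : u < 2 * M) (hr : r < 2 * M)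
    (hce : c.choose e % 2 = 1) :
    (c * (2 * M) + u).choose (e * (2 * M) + r) % 2 = u.choose r % 2 := by
  rw [ell_block n M c e u r hM hu hr, hce]
  omega

/-- Block evaluation when the block-level binomial coefficient is even. -/
lemma entry0 (n M c e u r : ℕ) (hM : 2 ^ n = M) (hu : u < 2 * M) (hr : r < 2 * M)
    (hce : c.choose e % 2 = 0) :
    (c * (2 * M) + u).choose (e * (2 * M) + r) % 2 = 0 := by
  rw [ell_block n M c e u r hM hu hr, hce]
  omega

/-- Entry `(i,j)` of the infinite lower-triangular matrix `L`:
`binom(2i+1, i-j) mod 2` for `j ≤ i`, and `0` for `j > i`. -/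
def ell (i j : ℕ) : ℤ := if j ≤ i then ((2 * i + 1).choose (i - j) % 2 : ℕ) else 0

/-- `BA0BAB`-construction for `L`: writing `L(2^(n+1)) = [[A,0],[B,A]]` in `2^n`-blocks,
that is, `A a b = ell a b` and `B a b = ell (2^n + a) b` for `a, b < 2^n`, the matrix
`L(2^(n+2))` has the block form `[[A,0,0,0],[B,A,0,0],[0,B,A,0],[B,A,B,A]]`. -/
theorem ell_block_structure (n a b : ℕ) (ha : a < 2 ^ n) (hb : b < 2 ^ n) :
    -- block (1,1) = A  (so that indeed L(2^(n+1)) = [[A,0],[B,A]])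
    ell (2 ^ n + a) (2 ^ n + b) = ell a b ∧
    -- row 2 of L(2^(n+2)): [0, B, A, 0]
    ell (2 * 2 ^ n + a) b = 0 ∧
    ell (2 * 2 ^ n + a) (2 ^ n + b) = ell (2 ^ n + a) b ∧
    ell (2 * 2 ^ n + a) (2 * 2 ^ n + b) = ell a b ∧
    -- row 3 of L(2^(n+2)): [B, A, B, A]
    ell (3 * 2 ^ n + a) b = ell (2 ^ n + a) b ∧
    ell (3 * 2 ^ n + a) (2 ^ n + b) = ell a b ∧
    ell (3 * 2 ^ n + a) (2 * 2 ^ n + b) = ell (2 ^ n + a) b ∧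
    ell (3 * 2 ^ n + a) (3 * 2 ^ n + b) = ell a b := by
  simp only [ell]
  obtain ⟨M, hM⟩ : ∃ M, (2:ℕ) ^ n = M := ⟨_, rfl⟩
  rw [hM] at ha hb ⊢
  have hu : 2 * a + 1 < 2 * M := by omega
  refine ⟨?_, ?_, ?_, ?_, ?_, ?_, ?_, ?_⟩
  · -- ell (M+a) (M+b) = ell a b
    by_cases h : b ≤ a
    · rw [if_pos (by omega), if_pos h]
      norm_cast
      conv_lhs => rw [show 2 * (M + a) + 1 = 1 * (2 * M) + (2 * a + 1) from by ring,
        show M + a - (M + b) = 0 * (2 * M) + (a - b) from by omega]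
      conv_rhs => rw [show 2 * a + 1 = 0 * (2 * M) + (2 * a + 1) from by ring,
        show a - b = 0 * (2 * M) + (a - b) from by ring]
      rw [entry1 n M 1 0 _ _ hM hu (by omega) (by decide),
        entry1 n M 0 0 _ _ hM hu (by omega) (by decide)]
    · rw [if_neg (by omega), if_neg (by omega)]
  · -- ell (2M+a) b = 0
    rw [if_pos (by omega)]
    norm_cast
    by_cases h : b ≤ a
    · rw [show 2 * (2 * M + a) + 1 = 2 * (2 * M) + (2 * a + 1) from by ring,
        show 2 * M + a - b = 1 * (2 * M) + (a - b) from by omega,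
        entry0 n M 2 1 _ _ hM hu (by omega) (by decide)]
    · rw [show 2 * (2 * M + a) + 1 = 2 * (2 * M) + (2 * a + 1) from by ring,
        show 2 * M + a - b = 0 * (2 * M) + (2 * M + a - b) from by omega,
        entry1 n M 2 0 _ _ hM hu (by omega) (by decide),
        Nat.choose_eq_zero_of_lt (by omega : 2 * a + 1 < 2 * M + a - b)]
  · -- ell (2M+a) (M+b) = ell (M+a) b
    rw [if_pos (by omega), if_pos (by omega)]
    norm_cast
    conv_lhs => rw [show 2 * (2 * M + a) + 1 = 2 * (2 * M) + (2 * a + 1) from by ring,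
      show 2 * M + a - (M + b) = 0 * (2 * M) + (M + a - b) from by omega]
    conv_rhs => rw [show 2 * (M + a) + 1 = 1 * (2 * M) + (2 * a + 1) from by ring,
      show M + a - b = 0 * (2 * M) + (M + a - b) from by omega]
    rw [entry1 n M 2 0 _ _ hM hu (by omega) (by decide),
      entry1 n M 1 0 _ _ hM hu (by omega) (by decide)]
  · -- ell (2M+a) (2M+b) = ell a b
    by_cases h : b ≤ a
    · rw [if_pos (by omega), if_pos h]
      norm_cast
      conv_lhs => rw [show 2 * (2 * M + a) + 1 = 2 * (2 * M) + (2 * a + 1) from by ring,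
        show 2 * M + a - (2 * M + b) = 0 * (2 * M) + (a - b) from by omega]
      conv_rhs => rw [show 2 * a + 1 = 0 * (2 * M) + (2 * a + 1) from by ring,
        show a - b = 0 * (2 * M) + (a - b) from by ring]
      rw [entry1 n M 2 0 _ _ hM hu (by omega) (by decide),
        entry1 n M 0 0 _ _ hM hu (by omega) (by decide)]
    · rw [if_neg (by omega), if_neg (by omega)]
  · -- ell (3M+a) b = ell (M+a) b
    rw [if_pos (by omega), if_pos (by omega)]
    norm_cast
    conv_lhs => rw [show 2 * (3 * M + a) + 1 = 3 * (2 * M) + (2 * a + 1) from by ring,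
      show 3 * M + a - b = 1 * (2 * M) + (M + a - b) from by omega]
    conv_rhs => rw [show 2 * (M + a) + 1 = 1 * (2 * M) + (2 * a + 1) from by ring,
      show M + a - b = 0 * (2 * M) + (M + a - b) from by omega]
    rw [entry1 n M 3 1 _ _ hM hu (by omega) (by decide),
      entry1 n M 1 0 _ _ hM hu (by omega) (by decide)]
  · -- ell (3M+a) (M+b) = ell a b
    by_cases h : b ≤ a
    · rw [if_pos (by omega), if_pos h]
      norm_cast
      conv_lhs => rw [show 2 * (3 * M + a) + 1 = 3 * (2 * M) + (2 * a + 1) from by ring,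
        show 3 * M + a - (M + b) = 1 * (2 * M) + (a - b) from by omega]
      conv_rhs => rw [show 2 * a + 1 = 0 * (2 * M) + (2 * a + 1) from by ring,
        show a - b = 0 * (2 * M) + (a - b) from by ring]
      rw [entry1 n M 3 1 _ _ hM hu (by omega) (by decide),
        entry1 n M 0 0 _ _ hM hu (by omega) (by decide)]
    · rw [if_pos (by omega), if_neg (by omega)]
      norm_cast
      rw [show 2 * (3 * M + a) + 1 = 3 * (2 * M) + (2 * a + 1) from by ring,
        show 3 * M + a - (M + b) = 0 * (2 * M) + (2 * M + a - b) from by omega,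
        entry1 n M 3 0 _ _ hM hu (by omega) (by decide),
        Nat.choose_eq_zero_of_lt (by omega : 2 * a + 1 < 2 * M + a - b)]
  · -- ell (3M+a) (2M+b) = ell (M+a) b
    rw [if_pos (by omega), if_pos (by omega)]
    norm_cast
    conv_lhs => rw [show 2 * (3 * M + a) + 1 = 3 * (2 * M) + (2 * a + 1) from by ring,
      show 3 * M + a - (2 * M + b) = 0 * (2 * M) + (M + a - b) from by omega]
    conv_rhs => rw [show 2 * (M + a) + 1 = 1 * (2 * M) + (2 * a + 1) from by ring,
      show M + a - b = 0 * (2 * M) + (M + a - b) from by omega]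
    rw [entry1 n M 3 0 _ _ hM hu (by omega) (by decide),
      entry1 n M 1 0 _ _ hM hu (by omega) (by decide)]
  · -- ell (3M+a) (3M+b) = ell a b
    by_cases h : b ≤ a
    · rw [if_pos (by omega), if_pos h]
      norm_cast
      conv_lhs => rw [show 2 * (3 * M + a) + 1 = 3 * (2 * M) + (2 * a + 1) from by ring,
        show 3 * M + a - (3 * M + b) = 0 * (2 * M) + (a - b) from by omega]
      conv_rhs => rw [show 2 * a + 1 = 0 * (2 * M) + (2 * a + 1) from by ring,
        show a - b = 0 * (2 * M) + (a - b) from by ring]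
      rw [entry1 n M 3 0 _ _ hM hu (by omega) (by decide),
        entry1 n M 0 0 _ _ hM hu (by omega) (by decide)]
    · rw [if_neg (by omega), if_neg (by omega)]
end

section
/- Let M(k) be the k×k lower-triangular 0/1-matrix with entries m_{i,j} = binom(i+j, 2j) mod 2. If M(2^(n+1)) = [[A',0],[B',A']] in 2^n-blocks, then M(2^(n+2)) = [[A',0,0,0],[B',A',0,0],[A',B',A',0],[B',0,B',A']]. -/
/-!
Since `m i j` is the parity of `binom(i+j, 2j)`, Lucas's theorem in base `2^(k+1)` splits
`binom(i+j, 2j)` into a high digit and a low digit. For the `2^k`-blocks of `M` this gives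
`block (c, d) = m c d • A` and `block (c + 1, d) = m c d • B` whenever `c + d` is even, where `A`
and `B` are the blocks `(0, 0)` and `(1, 0)`. The `4 × 4` block pattern is then read off `M(4)`.
-/

/-- Entry `(i,j)` of the infinite lower-triangular matrix `M`: `binom(i+j, 2j) mod 2`
(which vanishes automatically for `j > i`). -/
def emEntry (i j : ℕ) : ℤ := ((i + j).choose (2 * j) % 2 : ℕ)

namespace Choose

variable {p : ℕ} [Fact p.Prime]

theorem choose_pow_mul_add_modEq (k : ℕ) {c d r s : ℕ} (hr : r < p ^ k) (hs : s < p ^ k) :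
    (p ^ k * c + r).choose (p ^ k * d + s) ≡ c.choose d * r.choose s [MOD p] := by
  induction k generalizing r s with
  | zero =>
    rw [pow_zero] at hr hs
    obtain rfl : r = 0 := by omega
    obtain rfl : s = 0 := by omega
    simp [Nat.ModEq.refl]
  | succ k ih =>
    have hp : 0 < p := Nat.Prime.pos Fact.out
    have hr' : r / p < p ^ k := Nat.div_lt_of_lt_mul (by rwa [mul_comm, ← pow_succ])
    have hs' : s / p < p ^ k := Nat.div_lt_of_lt_mul (by rwa [mul_comm, ← pow_succ])
    calc (p ^ (k + 1) * c + r).choose (p ^ (k + 1) * d + s)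
        ≡ (r % p).choose (s % p) * (p ^ k * c + r / p).choose (p ^ k * d + s / p) [MOD p] := by
          have := choose_modEq_choose_mod_mul_choose_div_nat
            (n := p * (p ^ k * c) + r) (k := p * (p ^ k * d) + s) (p := p)
          rwa [Nat.mul_add_mod, Nat.mul_add_mod, Nat.mul_add_div hp, Nat.mul_add_div hp,
            ← mul_assoc, ← mul_assoc, ← pow_succ'] at this
      _ ≡ (r % p).choose (s % p) * (c.choose d * (r / p).choose (s / p)) [MOD p] :=
          (ih hr' hs').mul_left _
      _ = c.choose d * ((r % p).choose (s % p) * (r / p).choose (s / p)) := by ring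
      _ ≡ c.choose d * r.choose s [MOD p] :=
          (choose_modEq_choose_mod_mul_choose_div_nat (n := r) (k := s)).symm.mul_left _

/-- A carry out of the low block can only occur where both sides vanish mod `p`. -/
theorem choose_pow_mul_add_modEq_of_lt_add (k : ℕ) {c d t s : ℕ} (hs : s < p ^ k)
    (ht : t < p ^ k + s) :
    (p ^ k * c + t).choose (p ^ k * d + s) ≡ c.choose d * t.choose s [MOD p] := by
  rcases lt_or_ge t (p ^ k) with htk | htk
  · exact choose_pow_mul_add_modEq k htk hs
  obtain ⟨t₀, rfl⟩ := Nat.exists_eq_add_of_le htk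
  have ht₀ : t₀ < p ^ k := by omega
  have hzero : t₀.choose s = 0 := Nat.choose_eq_zero_of_lt (by omega)
  have hcarry : p ^ k * c + (p ^ k + t₀) = p ^ k * (c + 1) + t₀ := by ring
  calc (p ^ k * c + (p ^ k + t₀)).choose (p ^ k * d + s)
      ≡ (c + 1).choose d * t₀.choose s [MOD p] := hcarry ▸ choose_pow_mul_add_modEq k ht₀ hs
    _ = c.choose d * ((1 : ℕ).choose 0 * t₀.choose s) := by simp [hzero]
    _ ≡ c.choose d * (p ^ k * 1 + t₀).choose (p ^ k * 0 + s) [MOD p] :=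
        (choose_pow_mul_add_modEq k ht₀ hs).symm.mul_left _
    _ = c.choose d * (p ^ k + t₀).choose s := by simp

end Choose

section emEntry

lemma emEntry_eq_mul_of_choose_modEq {i j c d a b : ℕ}
    (h : (i + j).choose (2 * j) ≡ (c + d).choose (2 * d) * (a + b).choose (2 * b) [MOD 2]) :
    emEntry i j = emEntry c d * emEntry a b := by
  unfold emEntry
  rw [h, Nat.mul_mod]
  rcases Nat.mod_two_eq_zero_or_one ((c + d).choose (2 * d)) with h₁ | h₁ <;>
    rcases Nat.mod_two_eq_zero_or_one ((a + b).choose (2 * b)) with h₂ | h₂ <;>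
    simp [h₁, h₂]

variable {k c d a b : ℕ}

theorem emEntry_block_even (hcd : Even (c + d)) (ha : a < 2 ^ k) (hb : b < 2 ^ k) :
    emEntry (2 ^ k * c + a) (2 ^ k * d + b) = emEntry c d * emEntry a b := by
  obtain ⟨q, hq⟩ := hcd
  apply emEntry_eq_mul_of_choose_modEq
  have hrow : 2 ^ k * c + a + (2 ^ k * d + b) = 2 ^ (k + 1) * q + (a + b) := by
    rw [pow_succ]; linear_combination 2 ^ k * hq
  have hcol : 2 * (2 ^ k * d + b) = 2 ^ (k + 1) * d + 2 * b := by ring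
  rw [hrow, hcol, hq, ← two_mul]
  exact (Choose.choose_pow_mul_add_modEq_of_lt_add (k + 1) (by omega) (by omega)).trans
    (Choose.choose_mul_mul_modEq_choose_nat.symm.mul_right _)

theorem emEntry_block_odd (hcd : Even (c + d)) (ha : a < 2 ^ k) (hb : b < 2 ^ k) :
    emEntry (2 ^ k * (c + 1) + a) (2 ^ k * d + b) = emEntry c d * emEntry (2 ^ k + a) b := by
  obtain ⟨q, hq⟩ := hcd
  apply emEntry_eq_mul_of_choose_modEq
  have hrow : 2 ^ k * (c + 1) + a + (2 ^ k * d + b) = 2 ^ (k + 1) * q + (2 ^ k + a + b) := by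
    rw [pow_succ]; linear_combination 2 ^ k * hq
  have hcol : 2 * (2 ^ k * d + b) = 2 ^ (k + 1) * d + 2 * b := by ring
  rw [hrow, hcol, hq, ← two_mul]
  exact (Choose.choose_pow_mul_add_modEq_of_lt_add (k + 1) (by omega) (by omega)).trans
    (Choose.choose_mul_mul_modEq_choose_nat.symm.mul_right _)

end emEntry

/-- `BA0BAB`-construction for `M`: writing `M(2^(n+1)) = [[A',0],[B',A']]` in `2^n`-blocks,
that is, `A' a b = emEntry a b` and `B' a b = emEntry (2^n + a) b` for `a, b < 2^n`, the matrix
`M(2^(n+2))` has the block form `[[A',0,0,0],[B',A',0,0],[A',B',A',0],[B',0,B',A']]`. -/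
theorem em_block_structure (n a b : ℕ) (ha : a < 2 ^ n) (hb : b < 2 ^ n) :
    -- block (1,1) = A'  (so that indeed M(2^(n+1)) = [[A',0],[B',A']])
    emEntry (2 ^ n + a) (2 ^ n + b) = emEntry a b ∧
    -- row 2 of M(2^(n+2)): [A', B', A', 0]
    emEntry (2 * 2 ^ n + a) b = emEntry a b ∧
    emEntry (2 * 2 ^ n + a) (2 ^ n + b) = emEntry (2 ^ n + a) b ∧
    emEntry (2 * 2 ^ n + a) (2 * 2 ^ n + b) = emEntry a b ∧
    -- row 3 of M(2^(n+2)): [B', 0, B', A']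
    emEntry (3 * 2 ^ n + a) b = emEntry (2 ^ n + a) b ∧
    emEntry (3 * 2 ^ n + a) (2 ^ n + b) = 0 ∧
    emEntry (3 * 2 ^ n + a) (2 * 2 ^ n + b) = emEntry (2 ^ n + a) b ∧
    emEntry (3 * 2 ^ n + a) (3 * 2 ^ n + b) = emEntry a b := by
  have blockEven (c d : ℕ) (h : Even (c + d)) := emEntry_block_even h ha hb
  have blockOdd (c d : ℕ) (h : Even (c + d)) := emEntry_block_odd h ha hb
  obtain ⟨e11, e20, e22, e31, e33⟩ : emEntry 1 1 = 1 ∧ emEntry 2 0 = 1 ∧ emEntry 2 2 = 1 ∧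
      emEntry 3 1 = 0 ∧ emEntry 3 3 = 1 := by decide
  refine ⟨?_, ?_, ?_, ?_, ?_, ?_, ?_, ?_⟩
  · simpa [e11] using blockEven 1 1 (by decide)
  · simpa [mul_comm, e20] using blockEven 2 0 (by decide)
  · simpa [mul_comm, e11] using blockOdd 1 1 (by decide)
  · simpa [mul_comm, e22] using blockEven 2 2 (by decide)
  · simpa [mul_comm, e20] using blockOdd 2 0 (by decide)
  · simpa [mul_comm, e31] using blockEven 3 1 (by decide)
  · simpa [mul_comm, e22] using blockOdd 2 2 (by decide)
  · simpa [mul_comm, e33] using blockEven 3 3 (by decide)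
end

section
/- Over 𝔽₂ (or ℤ with the signed version), the matrices L and M as above satisfy L · D_a · M = D_a as n×n matrices for every n, where D_a is the diagonal matrix with diagonal entries 1, -1, 1, -1, ...; equivalently over ℤ: Σ_k (binom(2i+1, i-k) mod 2)·(-1)^k·(binom(k+j, 2j) mod 2) = (-1)^i·δ_{i,j} for all 0 ≤ i, j. -/
/-!
By Lucas's theorem mod 2, `l_{i,k}` only depends on `⌊(i - k)/2⌋` and `m_{k,j}` only on
`⌊(k + j)/2⌋`, and halving the indices relates `l_{2a+ε,·}` and `m_{·,2b+δ}` to `l_{a,·}`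
and `m_{·,b}`. Grouping the signed sum into pairs of consecutive `k` therefore either makes it
cancel (when `i` and `j` have different parities) or turns it, up to the sign `(-1)^a` resp.
`-(-1)^b`, into the same sum for `(⌊i/2⌋, ⌊j/2⌋)`; induct on the binary expansion of `i`.
-/

open Finset

namespace Nat

theorem choose_two_mul_add_one_mod_two (n k : ℕ) :
    (2 * n + 1).choose k % 2 = n.choose (k / 2) % 2 := by
  have h :=
    Choose.choose_modEq_choose_mod_mul_choose_div_nat (p := 2) (n := 2 * n + 1) (k := k)
  rw [Nat.mul_add_mod_self_left, Nat.mul_add_div two_pos] at h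
  rcases Nat.mod_two_eq_zero_or_one k with hk | hk <;> simpa [hk, Nat.ModEq] using h

theorem choose_two_mul_two_mul_mod_two (n k : ℕ) :
    (2 * n).choose (2 * k) % 2 = n.choose k % 2 := by
  simpa [Nat.ModEq] using
    Choose.choose_modEq_choose_mod_mul_choose_div_nat (p := 2) (n := 2 * n) (k := 2 * k)

theorem choose_two_mul_two_mul_add_one_mod_two (n k : ℕ) :
    (2 * n).choose (2 * k + 1) % 2 = 0 := by
  simpa [Nat.ModEq] using
    Choose.choose_modEq_choose_mod_mul_choose_div_nat (p := 2) (n := 2 * n) (k := 2 * k + 1)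

end Nat

theorem sum_range_two_mul_neg_one_pow_mul (f : ℕ → ℤ) (n : ℕ) :
    ∑ k ∈ range (2 * n), (-1) ^ k * f k = ∑ m ∈ range n, (f (2 * m) - f (2 * m + 1)) := by
  induction n with
  | zero => simp
  | succ n ih =>
    rw [Nat.mul_succ, sum_range_succ, sum_range_succ, sum_range_succ, ih, pow_succ, pow_mul]
    simp only [even_two, Even.neg_pow, one_pow, one_mul, mul_neg, mul_one, neg_mul]
    ring

theorem ite_even_sub_ite_even_succ {x y : ℤ} (n : ℕ) (h : Odd n → y = x) :
    ((if Even n then x else 0) - if Even (n + 1) then y else 0) = (-1) ^ n * x := by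
  rcases Nat.even_or_odd n with hn | hn
  · simp [hn, hn.neg_one_pow, Nat.even_add_one]
  · simp [hn, hn.neg_one_pow, h hn, Nat.not_even_iff_odd.2 hn]

/-- `l_{i,k}`; the test `k ≤ i` is needed because for `k > i` the truncated `i - k = 0`
would give `1`. -/
def lCoeff (i k : ℕ) : ℤ :=
  if k ≤ i then (((2 * i + 1).choose (i - k) % 2 : ℕ) : ℤ) else 0

def mCoeff (k j : ℕ) : ℤ :=
  (((k + j).choose (2 * j) % 2 : ℕ) : ℤ)

theorem lCoeff_succ {i k : ℕ} (h : Odd (i + k)) : lCoeff i (k + 1) = lCoeff i k := by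
  by_cases hk : k < i
  · obtain ⟨t, rfl⟩ : ∃ t, i = k + 2 * t + 1 := by
      obtain ⟨t, ht⟩ := h
      exact ⟨t - k, by omega⟩
    rw [lCoeff, lCoeff, if_pos (by omega), if_pos (by omega),
      show k + 2 * t + 1 - (k + 1) = 2 * t by omega, show k + 2 * t + 1 - k = 2 * t + 1 by omega,
      Nat.choose_two_mul_add_one_mod_two, Nat.choose_two_mul_add_one_mod_two,
      Nat.mul_div_cancel_left _ two_pos, Nat.mul_add_div two_pos]
    rfl
  · have hki : k ≠ i := by rintro rfl; exact Nat.not_odd_iff_even.2 (by simp) h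
    rw [lCoeff, lCoeff, if_neg (by omega), if_neg (by omega)]

theorem lCoeff_two_mul_add_one_two_mul (a m : ℕ) : lCoeff (2 * a + 1) (2 * m) = lCoeff a m := by
  unfold lCoeff
  by_cases hm : m ≤ a
  · rw [if_pos (by omega), if_pos hm, Nat.choose_two_mul_add_one_mod_two,
      show (2 * a + 1 - 2 * m) / 2 = a - m by omega]
  · rw [if_neg (by omega), if_neg hm]

theorem lCoeff_two_mul_two_mul (a m : ℕ) :
    lCoeff (2 * a) (2 * m) = if Even (a + m) then lCoeff a m else 0 := by
  unfold lCoeff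
  by_cases hm : m ≤ a
  · rw [if_pos (by omega), if_pos hm, Nat.choose_two_mul_add_one_mod_two,
      show (2 * a - 2 * m) / 2 = a - m by omega]
    obtain ⟨t, ht | ht⟩ := Nat.even_or_odd' (a - m)
    · rw [if_pos (by rw [Nat.even_iff]; omega), ht, Nat.choose_two_mul_two_mul_mod_two,
        Nat.choose_two_mul_add_one_mod_two, Nat.mul_div_cancel_left _ two_pos]
    · rw [if_neg (by rw [Nat.even_iff]; omega), ht, Nat.choose_two_mul_two_mul_add_one_mod_two,
      Nat.cast_zero]
  · simp [hm, show ¬ 2 * m ≤ 2 * a by omega]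

theorem mCoeff_succ {k j : ℕ} (h : Even (k + j)) : mCoeff (k + 1) j = mCoeff k j := by
  obtain ⟨t, ht⟩ := h
  rw [mCoeff, mCoeff, show k + 1 + j = 2 * t + 1 by omega, show k + j = 2 * t by omega,
    Nat.choose_two_mul_add_one_mod_two, Nat.choose_two_mul_two_mul_mod_two,
    Nat.mul_div_cancel_left _ two_pos]

theorem mCoeff_two_mul_two_mul (m b : ℕ) : mCoeff (2 * m) (2 * b) = mCoeff m b := by
  rw [mCoeff, mCoeff, ← mul_add, Nat.choose_two_mul_two_mul_mod_two]

theorem mCoeff_two_mul_two_mul_add_one (m b : ℕ) :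
    mCoeff (2 * m) (2 * b + 1) = if Even (m + b + 1) then mCoeff m b else 0 := by
  rw [mCoeff, mCoeff, show 2 * m + (2 * b + 1) = 2 * (m + b) + 1 by ring,
    Nat.choose_two_mul_add_one_mod_two, show 2 * (2 * b + 1) / 2 = 2 * b + 1 by omega]
  obtain ⟨t, ht | ht⟩ := Nat.even_or_odd' (m + b)
  · rw [if_neg (by rw [Nat.even_iff]; omega), ht, Nat.choose_two_mul_two_mul_add_one_mod_two,
      Nat.cast_zero]
  · rw [if_pos (by rw [Nat.even_iff]; omega), ht, Nat.choose_two_mul_add_one_mod_two,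
      Nat.choose_two_mul_add_one_mod_two, show (2 * b + 1) / 2 = b by omega,
      Nat.mul_div_cancel_left _ two_pos]

theorem mCoeff_eq_zero_of_lt {k j : ℕ} (h : k < j) : mCoeff k j = 0 := by
  rw [mCoeff, Nat.choose_eq_zero_of_lt (by omega), Nat.zero_mod, Nat.cast_zero]

theorem lCoeff_two_mul_sub_lCoeff (a m : ℕ) :
    lCoeff (2 * a) (2 * m) - lCoeff (2 * a) (2 * m + 1) = (-1) ^ (a + m) * lCoeff a m := by
  rw [← lCoeff_succ (i := 2 * a) (k := 2 * m + 1) ⟨a + m, by ring⟩,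
    show 2 * m + 1 + 1 = 2 * (m + 1) by ring, lCoeff_two_mul_two_mul, lCoeff_two_mul_two_mul]
  exact ite_even_sub_ite_even_succ (a + m) lCoeff_succ

theorem mCoeff_two_mul_sub_mCoeff (m b : ℕ) :
    mCoeff (2 * m) (2 * b + 1) - mCoeff (2 * m + 1) (2 * b + 1) =
      (-1) ^ (m + b + 1) * mCoeff m b := by
  rw [← mCoeff_succ (k := 2 * m + 1) (j := 2 * b + 1) ⟨m + b + 1, by ring⟩,
    show 2 * m + 1 + 1 = 2 * (m + 1) by ring, mCoeff_two_mul_two_mul_add_one,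
    mCoeff_two_mul_two_mul_add_one, show m + 1 + b + 1 = m + b + 1 + 1 by ring]
  exact ite_even_sub_ite_even_succ (m + b + 1) fun h =>
    mCoeff_succ (Nat.not_odd_iff_even.1 (Nat.odd_add_one.1 h))

theorem sum_range_lCoeff_eq_of_lt {i N : ℕ} (h : i < N) (f : ℕ → ℤ) :
    ∑ k ∈ range N, (-1) ^ k * (lCoeff i k * f k) =
      ∑ k ∈ range (i + 1), (-1) ^ k * (lCoeff i k * f k) := by
  refine (sum_subset (range_subset_range.2 h) fun k _ hk => ?_).symm
  rw [lCoeff, if_neg (by simpa using hk), zero_mul, mul_zero]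

def lDaMEntry (i j : ℕ) : ℤ :=
  ∑ k ∈ range (i + 1), (-1) ^ k * (lCoeff i k * mCoeff k j)

theorem lDaMEntry_zero_left (j : ℕ) : lDaMEntry 0 j = if 0 = j then 1 else 0 := by
  rcases eq_or_ne j 0 with rfl | hj
  · simp [lDaMEntry, lCoeff, mCoeff]
  · simp [lDaMEntry, mCoeff_eq_zero_of_lt (Nat.pos_of_ne_zero hj), hj.symm]

theorem lDaMEntry_two_mul_two_mul (a b : ℕ) :
    lDaMEntry (2 * a) (2 * b) = (-1) ^ a * lDaMEntry a b := by
  rw [lDaMEntry, ← sum_range_lCoeff_eq_of_lt (show 2 * a < 2 * (a + 1) by omega),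
    sum_range_two_mul_neg_one_pow_mul, lDaMEntry, mul_sum]
  refine sum_congr rfl fun m _ => ?_
  rw [mCoeff_succ ⟨m + b, by ring⟩, ← sub_mul, lCoeff_two_mul_sub_lCoeff,
    mCoeff_two_mul_two_mul]
  ring

theorem lDaMEntry_two_mul_two_mul_add_one (a b : ℕ) : lDaMEntry (2 * a) (2 * b + 1) = 0 := by
  rw [lDaMEntry, sum_range_succ', mCoeff_eq_zero_of_lt (by omega : 0 < 2 * b + 1), mul_zero,
    mul_zero, add_zero]
  simp only [pow_succ, mul_neg_one, neg_mul, sum_neg_distrib, neg_eq_zero]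
  rw [sum_range_two_mul_neg_one_pow_mul (fun k => lCoeff (2 * a) (k + 1) * mCoeff (k + 1) _)]
  refine sum_eq_zero fun m _ => ?_
  rw [lCoeff_succ (k := 2 * m + 1) ⟨a + m, by ring⟩,
    mCoeff_succ (k := 2 * m + 1) ⟨m + b + 1, by ring⟩, sub_self]

theorem lDaMEntry_two_mul_add_one_two_mul (a b : ℕ) : lDaMEntry (2 * a + 1) (2 * b) = 0 := by
  rw [lDaMEntry, show 2 * a + 1 + 1 = 2 * (a + 1) by ring, sum_range_two_mul_neg_one_pow_mul]
  refine sum_eq_zero fun m _ => ?_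
  rw [lCoeff_succ ⟨a + m, by ring⟩, mCoeff_succ ⟨m + b, by ring⟩, sub_self]

theorem lDaMEntry_two_mul_add_one_two_mul_add_one (a b : ℕ) :
    lDaMEntry (2 * a + 1) (2 * b + 1) = (-1) ^ (b + 1) * lDaMEntry a b := by
  rw [lDaMEntry, show 2 * a + 1 + 1 = 2 * (a + 1) by ring, sum_range_two_mul_neg_one_pow_mul,
    lDaMEntry, mul_sum]
  refine sum_congr rfl fun m _ => ?_
  rw [lCoeff_succ ⟨a + m, by ring⟩, ← mul_sub, mCoeff_two_mul_sub_mCoeff,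
    lCoeff_two_mul_add_one_two_mul]
  ring

theorem lDaMEntry_eq (i j : ℕ) : lDaMEntry i j = (-1) ^ i * if i = j then 1 else 0 := by
  induction i using Nat.evenOddRec generalizing j with
  | h0 => rw [lDaMEntry_zero_left, pow_zero, one_mul]
  | h_even a ih =>
    obtain ⟨b, rfl | rfl⟩ := j.even_or_odd'
    · rw [lDaMEntry_two_mul_two_mul, ih, pow_mul, neg_one_sq, one_pow, ← mul_assoc, ← pow_add,
        ← two_mul, pow_mul, neg_one_sq, one_pow]
      simp only [mul_right_inj' two_ne_zero]
    · rw [lDaMEntry_two_mul_two_mul_add_one, if_neg (by omega), mul_zero]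
  | h_odd a ih =>
    obtain ⟨b, rfl | rfl⟩ := j.even_or_odd'
    · rw [lDaMEntry_two_mul_add_one_two_mul, if_neg (by omega), mul_zero]
    · rw [lDaMEntry_two_mul_add_one_two_mul_add_one, ih]
      rcases eq_or_ne a b with rfl | hab
      · rw [if_pos rfl, if_pos rfl]
        ring
      · rw [if_neg hab, if_neg (by omega), mul_zero, mul_zero, mul_zero]

/-- `L · D_a · M = D_a`: for all `i, j`,
`∑_{k=j}^{i} (binom(2i+1, i-k) mod 2)·(-1)^k·(binom(k+j, 2j) mod 2) = (-1)^i δ_{i,j}`. -/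
theorem L_Da_M_eq_Da (i j : ℕ) :
    ∑ k ∈ Finset.Icc j i,
        (((2 * i + 1).choose (i - k) % 2 : ℕ) : ℤ) * (-1) ^ k *
          (((k + j).choose (2 * j) % 2 : ℕ) : ℤ) =
      (-1) ^ i * (if i = j then 1 else 0) := by
  calc _ = ∑ k ∈ Icc j i, (-1) ^ k * (lCoeff i k * mCoeff k j) :=
        sum_congr rfl fun k hk => by
          rw [lCoeff, if_pos (mem_Icc.1 hk).2, mCoeff]
          ring
    _ = lDaMEntry i j := by
        refine sum_subset (fun k hk => mem_range.2 (Nat.lt_succ_of_le (mem_Icc.1 hk).2))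
          fun k hki hkj => ?_
        rw [mCoeff_eq_zero_of_lt, mul_zero, mul_zero]
        simp only [mem_range, mem_Icc] at hki hkj
        omega
    _ = _ := lDaMEntry_eq i j
end

section
/- For all natural numbers i > j: Σ_{k} (binom(i+k, 2k) mod 2)·(binom(2k+1, k-j) mod 2) = 2 when computed in ℤ, and it equals 1 when i = j, and 0 when i < j. In other words, the product M·L (over ℤ, with entries reduced mod 2 to {0,1} before multiplying) has entries 0 above the diagonal, 1 on the diagonal, and 2 below. -/
/-!
Besides `M i k = binom(i+k, 2k)` and `L k j = binom(2k+1, k-j)` (all mod 2) consider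
`M' i k = binom(i+k, 2k+1)` and `L' k j = binom(2k, k-j)`. By Lucas' theorem for `p = 2`, halving
both indices of an entry of fixed parity sends each of `M, M', L, L'` to one of them or to `0`.
Splitting the summation index by parity therefore expresses `M'L` and `ML'` through each other at
halved indices, and strong induction gives `(M'L) i j = [j < i]` and `(ML') i j = [j ≤ i]`. The
same splitting gives `(ML) i j = (ML') ⌊i/2⌋ ⌈j/2⌉ + (M'L) ⌈i/2⌉ ⌊j/2⌋`, which is `0`, `1` or `2`.
-/

open Finset

lemma Nat.choose_mod_two (n k : ℕ) :
    n.choose k % 2 = if n % 2 < k % 2 then 0 else (n / 2).choose (k / 2) % 2 := by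
  rw [Choose.choose_modEq_choose_mod_mul_choose_div_nat (p := 2)]
  rcases Nat.mod_two_eq_zero_or_one n with hn | hn <;>
    rcases Nat.mod_two_eq_zero_or_one k with hk | hk <;> simp [hn, hk]

lemma Finset.sum_range_eq_of_vanish {β : Type*} [AddCommMonoid β] {f : ℕ → β} {m n : ℕ}
    (hmn : m ≤ n) (hf : ∀ k, m ≤ k → f k = 0) : ∑ k ∈ range n, f k = ∑ k ∈ range m, f k :=
  (sum_subset (range_subset_range.2 hmn) fun k _ hk ↦ hf k (by simpa using hk)).symm

lemma Finset.sum_range_two_mul {β : Type*} [AddCommMonoid β] (f : ℕ → β) (n : ℕ) :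
    ∑ k ∈ range (2 * n), f k = ∑ c ∈ range n, (f (2 * c) + f (2 * c + 1)) := by
  induction n with
  | zero => simp
  | succ n ih => rw [Nat.mul_succ, sum_range_succ, sum_range_succ, sum_range_succ, ih, add_assoc]

lemma Finset.sum_range_succ_eq_sum_even_add_odd {β : Type*} [AddCommMonoid β] {f : ℕ → β}
    {i : ℕ} (hf : ∀ k, i < k → f k = 0) :
    ∑ k ∈ range (i + 1), f k = ∑ c ∈ range (i + 1), (f (2 * c) + f (2 * c + 1)) := by
  rw [← sum_range_two_mul]
  exact (sum_range_eq_of_vanish (by omega) fun k hk ↦ hf k hk).symm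

namespace BinomMod2

def M (i k : ℕ) : ℕ := (i + k).choose (2 * k) % 2

def M' (i k : ℕ) : ℕ := (i + k).choose (2 * k + 1) % 2

/-- `binom(2k+1, k-j) mod 2`, written as `binom(2k+1, k+j+1) mod 2` by symmetry so that it
vanishes for `k < j` instead of meeting a truncated subtraction. -/
def L (k j : ℕ) : ℕ := (2 * k + 1).choose (k + j + 1) % 2

def L' (k j : ℕ) : ℕ := (2 * k).choose (k + j) % 2

lemma M_eq_zero {i k : ℕ} (h : i < k) : M i k = 0 := by
  rw [M, Nat.choose_eq_zero_of_lt (by omega), Nat.zero_mod]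

lemma M'_eq_zero {i k : ℕ} (h : i ≤ k) : M' i k = 0 := by
  rw [M', Nat.choose_eq_zero_of_lt (by omega), Nat.zero_mod]

lemma L_eq_zero {k j : ℕ} (h : k < j) : L k j = 0 := by
  rw [L, Nat.choose_eq_zero_of_lt (by omega), Nat.zero_mod]

lemma L_eq_choose_sub {k j : ℕ} (h : j ≤ k) : L k j = (2 * k + 1).choose (k - j) % 2 := by
  rw [L, Nat.choose_symm_of_eq_add (show 2 * k + 1 = k + j + 1 + (k - j) by omega)]

lemma M_two_mul (i c : ℕ) : M i (2 * c) = M (i / 2) c := by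
  rw [M, M, Nat.choose_mod_two, if_neg (by omega)]; congr 2 <;> omega

lemma M_two_mul_add_one (i c : ℕ) : M i (2 * c + 1) = M' ((i + 1) / 2) c := by
  rw [M, M', Nat.choose_mod_two, if_neg (by omega)]; congr 2 <;> omega

lemma M'_two_mul_two_mul (a c : ℕ) : M' (2 * a) (2 * c) = 0 := by
  rw [M', Nat.choose_mod_two, if_pos (by omega)]

lemma M'_two_mul_two_mul_add_one (a c : ℕ) : M' (2 * a) (2 * c + 1) = M' a c := by
  rw [M', M', Nat.choose_mod_two, if_neg (by omega)]; congr 2 <;> omega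

lemma M'_two_mul_add_one_two_mul (a c : ℕ) : M' (2 * a + 1) (2 * c) = M a c := by
  rw [M', M, Nat.choose_mod_two, if_neg (by omega)]; congr 2 <;> omega

lemma M'_two_mul_add_one_two_mul_add_one (a c : ℕ) : M' (2 * a + 1) (2 * c + 1) = 0 := by
  rw [M', Nat.choose_mod_two, if_pos (by omega)]

lemma L_two_mul (c j : ℕ) : L (2 * c) j = L' c ((j + 1) / 2) := by
  rw [L, L', Nat.choose_mod_two, if_neg (by omega)]; congr 2 <;> omega

lemma L_two_mul_add_one (c j : ℕ) : L (2 * c + 1) j = L c (j / 2) := by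
  rw [L, L, Nat.choose_mod_two, if_neg (by omega)]; congr 2 <;> omega

lemma L'_two_mul_two_mul (c d : ℕ) : L' (2 * c) (2 * d) = L' c d := by
  rw [L', L', Nat.choose_mod_two, if_neg (by omega)]; congr 2 <;> omega

lemma L'_two_mul_two_mul_add_one (c d : ℕ) : L' (2 * c) (2 * d + 1) = 0 := by
  rw [L', Nat.choose_mod_two, if_pos (by omega)]

lemma L'_two_mul_add_one_two_mul (c d : ℕ) : L' (2 * c + 1) (2 * d) = 0 := by
  rw [L', Nat.choose_mod_two, if_pos (by omega)]

lemma L'_two_mul_add_one_two_mul_add_one (c d : ℕ) : L' (2 * c + 1) (2 * d + 1) = L c d := by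
  rw [L', L, Nat.choose_mod_two, if_neg (by omega)]; congr 2 <;> omega

def M'L (i j : ℕ) : ℕ := ∑ k ∈ range (i + 1), M' i k * L k j

def ML' (i j : ℕ) : ℕ := ∑ k ∈ range (i + 1), M i k * L' k j

lemma M'L_two_mul (a j : ℕ) : M'L (2 * a) j = M'L a (j / 2) := by
  unfold M'L
  rw [sum_range_succ_eq_sum_even_add_odd fun k hk ↦ by rw [M'_eq_zero hk.le, zero_mul]]
  simp only [M'_two_mul_two_mul, M'_two_mul_two_mul_add_one, L_two_mul_add_one, zero_mul,
    zero_add]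
  exact sum_range_eq_of_vanish (by omega) fun c hc ↦ by rw [M'_eq_zero (by omega), zero_mul]

lemma M'L_two_mul_add_one (a j : ℕ) : M'L (2 * a + 1) j = ML' a ((j + 1) / 2) := by
  unfold M'L ML'
  rw [sum_range_succ_eq_sum_even_add_odd fun k hk ↦ by rw [M'_eq_zero hk.le, zero_mul]]
  simp only [M'_two_mul_add_one_two_mul, M'_two_mul_add_one_two_mul_add_one, L_two_mul, zero_mul,
    add_zero]
  exact sum_range_eq_of_vanish (by omega) fun c hc ↦ by rw [M_eq_zero (by omega), zero_mul]

lemma ML'_two_mul (i d : ℕ) : ML' i (2 * d) = ML' (i / 2) d := by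
  unfold ML'
  rw [sum_range_succ_eq_sum_even_add_odd fun k hk ↦ by rw [M_eq_zero hk, zero_mul]]
  simp only [M_two_mul, L'_two_mul_two_mul, L'_two_mul_add_one_two_mul, mul_zero, add_zero]
  exact sum_range_eq_of_vanish (by omega) fun c hc ↦ by rw [M_eq_zero (by omega), zero_mul]

lemma ML'_two_mul_add_one (i d : ℕ) : ML' i (2 * d + 1) = M'L ((i + 1) / 2) d := by
  unfold ML' M'L
  rw [sum_range_succ_eq_sum_even_add_odd fun k hk ↦ by rw [M_eq_zero hk, zero_mul]]
  simp only [M_two_mul_add_one, L'_two_mul_two_mul_add_one, L'_two_mul_add_one_two_mul_add_one,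
    mul_zero, zero_add]
  exact sum_range_eq_of_vanish (by omega) fun c hc ↦ by rw [M'_eq_zero (by omega), zero_mul]

theorem M'L_eq_and_ML'_eq (i j : ℕ) :
    M'L i j = (if j < i then 1 else 0) ∧ ML' i j = if j ≤ i then 1 else 0 := by
  induction h : i + j using Nat.strong_induction_on generalizing i j with
  | _ n ih =>
  rcases Nat.eq_zero_or_pos i with rfl | hi
  · constructor
    · simp [M'L, M']
    · cases j <;> simp [ML', M, L']
  constructor
  · obtain ⟨a, rfl | rfl⟩ := Nat.even_or_odd' i
    · rw [M'L_two_mul, (ih _ (by omega) a (j / 2) rfl).1]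
      split_ifs <;> omega
    · rw [M'L_two_mul_add_one, (ih _ (by omega) a ((j + 1) / 2) rfl).2]
      split_ifs <;> omega
  · obtain ⟨d, rfl | rfl⟩ := Nat.even_or_odd' j
    · rw [ML'_two_mul, (ih _ (by omega) (i / 2) d rfl).2]
      split_ifs <;> omega
    · rw [ML'_two_mul_add_one, (ih _ (by omega) ((i + 1) / 2) d rfl).1]
      split_ifs <;> omega

lemma sum_M_mul_L (i j : ℕ) :
    ∑ k ∈ range (i + 1), M i k * L k j =
      ML' (i / 2) ((j + 1) / 2) + M'L ((i + 1) / 2) (j / 2) := by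
  rw [sum_range_succ_eq_sum_even_add_odd fun k hk ↦ by rw [M_eq_zero hk, zero_mul]]
  simp only [M_two_mul, M_two_mul_add_one, L_two_mul, L_two_mul_add_one, sum_add_distrib]
  unfold ML' M'L
  congr 1
  · exact sum_range_eq_of_vanish (by omega) fun c hc ↦ by rw [M_eq_zero (by omega), zero_mul]
  · exact sum_range_eq_of_vanish (by omega) fun c hc ↦ by rw [M'_eq_zero (by omega), zero_mul]

theorem sum_M_mul_L_eq (i j : ℕ) :
    ∑ k ∈ range (i + 1), M i k * L k j = if i < j then 0 else if i = j then 1 else 2 := by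
  rw [sum_M_mul_L, (M'L_eq_and_ML'_eq _ _).1, (M'L_eq_and_ML'_eq _ _).2]
  split_ifs <;> omega

end BinomMod2

/-- The product `M · L` (entries reduced mod 2 to `{0,1}` before multiplying over `ℤ`) has
entries `0` above the diagonal, `1` on the diagonal and `2` below the diagonal:
`∑_{k=j}^{i} (binom(i+k, 2k) mod 2)·(binom(2k+1, k-j) mod 2)` equals `0` if `i < j`,
`1` if `i = j` and `2` if `i > j`. -/
theorem M_mul_L_entries (i j : ℕ) :
    ∑ k ∈ Finset.Icc j i,
        (((i + k).choose (2 * k) % 2 : ℕ) : ℤ) * (((2 * k + 1).choose (k - j) % 2 : ℕ) : ℤ) =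
      if i < j then 0 else if i = j then 1 else 2 := by
  open BinomMod2 in
  have hIcc : ∑ k ∈ Icc j i, M i k * L k j = ∑ k ∈ range (i + 1), M i k * L k j :=
    sum_subset (fun k hk ↦ mem_range.2 (Nat.lt_succ_of_le (mem_Icc.1 hk).2)) fun k hki hk ↦ by
      rw [mem_range] at hki
      rw [mem_Icc] at hk
      rw [L_eq_zero (by omega), mul_zero]
  calc _ = ((∑ k ∈ Icc j i, M i k * L k j : ℕ) : ℤ) := by
        rw [Nat.cast_sum]
        refine sum_congr rfl fun k hk ↦ ?_
        rw [Nat.cast_mul, M, L_eq_choose_sub (mem_Icc.1 hk).1]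
    _ = _ := by
        rw [hIcc, sum_M_mul_L_eq]
        split_ifs <;> rfl
end

section
/- For every n ≥ 1, the determinant of the n×n Hankel matrix H(n) with entries h_{i,j} = μ_{i+j}, where μ_m = 1 if m+1 is a power of 2 and 0 otherwise, equals (-1)^(binom(n,2)). -/
open Classical
open Equiv Equiv.Perm Finset

section SignSumComm

variable {α : Type*} [Fintype α] [DecidableEq α]

private def sw (i : α) : Equiv.Perm (α ⊕ α) := Equiv.swap (Sum.inl i) (Sum.inr i)

private lemma sw_comm : (↑(univ : Finset α) : Set α).Pairwise fun a b => Commute (sw a) (sw b) := by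
  intro i _ j _ hij
  apply Equiv.Perm.Disjoint.commute
  intro x
  rcases x with x | x <;>
  · rcases eq_or_ne x i with rfl | hxi
    · right
      apply Equiv.swap_apply_of_ne_of_ne <;> simp [hij, sw]
    · left
      apply Equiv.swap_apply_of_ne_of_ne <;> simp [hxi, sw]

private lemma sw_eval (s : Finset α) (comm) :
    ∀ x : α ⊕ α, (s.noncommProd sw comm) x =
      Sum.elim (fun i => if i ∈ s then Sum.inr i else Sum.inl i)
        (fun i => if i ∈ s then Sum.inl i else Sum.inr i) x := by
  induction s using Finset.induction_on with
  | empty => intro x; cases x <;> simp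
  | @insert a s ha IH =>
    intro x
    rw [Finset.noncommProd_insert_of_notMem _ _ _ _ ha]
    have hI := IH (fun p hp q hq hpq =>
      (sw_comm (mem_coe.2 (mem_univ p)) (mem_coe.2 (mem_univ q)) hpq))
    rcases x with x | x <;> simp only [Equiv.Perm.mul_apply, hI, Sum.elim_inl, Sum.elim_inr]
    · by_cases hxs : x ∈ s
      · have hxa : x ≠ a := fun h => ha (h ▸ hxs)
        simp [hxs, hxa, sw, Equiv.swap_apply_of_ne_of_ne]
      · rcases eq_or_ne x a with rfl | hxa
        · simp [hxs, sw]
        · simp [hxs, hxa, sw, Equiv.swap_apply_of_ne_of_ne]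
    · by_cases hxs : x ∈ s
      · have hxa : x ≠ a := fun h => ha (h ▸ hxs)
        simp [hxs, hxa, sw, Equiv.swap_apply_of_ne_of_ne]
      · rcases eq_or_ne x a with rfl | hxa
        · simp [hxs, sw]
        · simp [hxs, hxa, sw, Equiv.swap_apply_of_ne_of_ne]

private lemma sumComm_eq_noncommProd :
    (Equiv.sumComm α α : Equiv.Perm (α ⊕ α)) = (univ : Finset α).noncommProd sw sw_comm := by
  ext x
  rcases x with x | x <;> simp [sw_eval]

private lemma sign_sumComm_self :
    Equiv.Perm.sign (Equiv.sumComm α α : Equiv.Perm (α ⊕ α)) = (-1) ^ (Fintype.card α) := by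
  rw [sumComm_eq_noncommProd, Finset.map_noncommProd]
  exact Finset.noncommProd_eq_pow_card _ _ _ (-1) (fun x _ => Equiv.Perm.sign_swap (by simp [sw]))

end SignSumComm

private lemma pow_window {K t : ℕ} (h1 : 2 ^ K < t) (h2 : t < 2 ^ (K + 2)) :
    (∃ k, t = 2 ^ k) ↔ t = 2 ^ (K + 1) := by
  constructor
  · rintro ⟨k, rfl⟩
    have hK : K < k := (Nat.pow_lt_pow_iff_right (by norm_num)).mp h1
    have hK2 : k < K + 2 := (Nat.pow_lt_pow_iff_right (by norm_num)).mp h2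
    rw [show k = K + 1 by omega]
  · rintro rfl; exact ⟨K + 1, rfl⟩

private lemma par_lemma (b : ℕ) : ∀ a : ℕ, a ≤ b →
    ((-1 : ℤ)) ^ ((b + a).choose 2) = (-1) ^ ((b - a).choose 2) * (-1) ^ a := by
  intro a
  induction a with
  | zero => simp
  | succ a IHa =>
    intro h
    have ha : a ≤ b := by omega
    have h1 : (b + (a + 1)).choose 2 = (b + a).choose 2 + (b + a) := by
      rw [show b + (a + 1) = (b + a) + 1 from rfl, Nat.choose_succ_succ, Nat.choose_one_right]
      simp only [show Nat.succ 1 = 2 from rfl]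
      omega
    have h2 : (b - a).choose 2 = (b - (a + 1)).choose 2 + (b - (a + 1)) := by
      rw [show b - a = (b - (a + 1)) + 1 by omega, Nat.choose_succ_succ, Nat.choose_one_right]
      simp only [show Nat.succ 1 = 2 from rfl]
      omega
    rw [h1, pow_add, IHa ha]
    have key : (-1 : ℤ) ^ (b - (a + 1)) * (-1) ^ a * (-1) ^ (b + a) = (-1) ^ (a + 1) := by
      rw [← pow_add, ← pow_add, show (b - (a + 1)) + a + (b + a) = (a + 1) + 2 * (b - 1) by omega,
        pow_add, pow_mul]
      norm_num
    calc (-1 : ℤ) ^ ((b - a).choose 2) * (-1) ^ a * (-1) ^ (b + a)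
        = (-1) ^ ((b - (a + 1)).choose 2) * ((-1) ^ (b - (a + 1)) * (-1) ^ a * (-1) ^ (b + a)) := by
          rw [h2, pow_add]; ring
      _ = (-1) ^ ((b - (a + 1)).choose 2) * (-1) ^ (a + 1) := by rw [key]

private lemma cond_zero {t K : ℕ} (h1 : 2 ^ K < t) (h2 : t < 2 ^ (K + 1)) :
    (if ∃ k : ℕ, t = 2 ^ k then (1 : ℤ) else 0) = 0 := by
  rw [if_neg]
  rintro ⟨k, rfl⟩
  have hK : K < k := (Nat.pow_lt_pow_iff_right (by norm_num)).mp h1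
  have hK2 : k < K + 1 := (Nat.pow_lt_pow_iff_right (by norm_num)).mp h2
  omega

private lemma cond_iff {t K : ℕ} {p : Prop} [Decidable p] (h1 : 2 ^ K < t) (h2 : t < 2 ^ (K + 2))
    (h3 : (t = 2 ^ (K + 1)) ↔ p) :
    (if ∃ k : ℕ, t = 2 ^ k then (1 : ℤ) else 0) = (if p then 1 else 0) := by
  rw [if_congr ((pow_window h1 h2).trans h3) rfl rfl]

private lemma hankel_step (n : ℕ) (hn2 : 2 ≤ n)
    (IH : ∀ m, m < n →
      (Matrix.of fun i j : Fin m =>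
        if ∃ k : ℕ, (i : ℕ) + (j : ℕ) + 1 = 2 ^ k then (1 : ℤ) else 0).det
        = (-1) ^ m.choose 2) :
    (Matrix.of fun i j : Fin n =>
      if ∃ k : ℕ, (i : ℕ) + (j : ℕ) + 1 = 2 ^ k then (1 : ℤ) else 0).det
      = (-1) ^ n.choose 2 := by
  obtain ⟨K, hbl, hbu⟩ : ∃ K, 2 ^ K < n ∧ n ≤ 2 ^ (K + 1) := by
    refine ⟨Nat.log 2 (n - 1), ?_, ?_⟩
    · have h := Nat.pow_log_le_self 2 (show n - 1 ≠ 0 by omega)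
      omega
    · have h := Nat.lt_pow_succ_log_self (by norm_num : 1 < 2) (n - 1)
      omega
  have h2b : 2 ^ (K + 1) = 2 * 2 ^ K := by ring
  have h4b : 2 ^ (K + 2) = 4 * 2 ^ K := by ring
  have h8b : 2 ^ (K + 3) = 8 * 2 ^ K := by ring
  set b : ℕ := 2 ^ K with hb
  set a : ℕ := n - b with ha
  set c : ℕ := b - a with hc
  have ha1 : 1 ≤ a := by omega
  have hab : a ≤ b := by omega
  have hsum : c + a + a = n := by omega
  have hclt : c < n := by omega
  set M : Matrix (Fin n) (Fin n) ℤ :=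
    Matrix.of (fun i j : Fin n =>
      if ∃ k : ℕ, (i : ℕ) + (j : ℕ) + 1 = 2 ^ k then (1 : ℤ) else 0) with hM
  set e : (Fin c ⊕ Fin a) ⊕ Fin a ≃ Fin n :=
    (Equiv.sumCongr finSumFinEquiv (Equiv.refl (Fin a))).trans
      (finSumFinEquiv.trans (finCongr hsum)) with he
  have hv1 : ∀ x : Fin c, ((e (Sum.inl (Sum.inl x)) : Fin n) : ℕ) = (x : ℕ) := by
    intro x; simp [he]
  have hv2 : ∀ y : Fin a, ((e (Sum.inl (Sum.inr y)) : Fin n) : ℕ) = c + (y : ℕ) := by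
    intro y; simp [he]
  have hv3 : ∀ z : Fin a, ((e (Sum.inr z) : Fin n) : ℕ) = c + a + (z : ℕ) := by
    intro z; simp [he]
  set π : Equiv.Perm ((Fin c ⊕ Fin a) ⊕ Fin a) :=
    (Equiv.sumAssoc (Fin c) (Fin a) (Fin a)).symm.permCongr
      (Equiv.sumCongr (Equiv.refl (Fin c)) (Equiv.sumComm (Fin a) (Fin a))) with hπ
  have hp1 : ∀ x : Fin c, π (Sum.inl (Sum.inl x)) = Sum.inl (Sum.inl x) := by
    intro x; simp [hπ, Equiv.permCongr_apply]
  have hp2 : ∀ y : Fin a, π (Sum.inl (Sum.inr y)) = Sum.inr y := by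
    intro y; simp [hπ, Equiv.permCongr_apply]
  have hp3 : ∀ z : Fin a, π (Sum.inr z) = Sum.inl (Sum.inr z) := by
    intro z; simp [hπ, Equiv.permCongr_apply]
  have hsign : ((Equiv.Perm.sign π : ℤˣ) : ℤ) = (-1) ^ a := by
    rw [hπ, Equiv.Perm.sign_permCongr, Equiv.Perm.sign_sumCongr, sign_sumComm_self]
    simp
  set A : Matrix (Fin c) (Fin c) ℤ :=
    Matrix.of (fun i j : Fin c =>
      if ∃ k : ℕ, (i : ℕ) + (j : ℕ) + 1 = 2 ^ k then (1 : ℤ) else 0) with hA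
  set X : Matrix (Fin c) (Fin a) ℤ :=
    Matrix.of (fun x v => M (e (Sum.inl (Sum.inl x))) (e (Sum.inl (Sum.inr v)))) with hX
  set C' : Matrix (Fin a) (Fin c ⊕ Fin a) ℤ :=
    Matrix.of (fun z q => M (e (Sum.inl (Sum.inr z))) (e (Sum.inl q))) with hC
  set J1 : Matrix (Fin a) (Fin a) ℤ :=
    Matrix.of (fun y z : Fin a =>
      if (y : ℕ) + (z : ℕ) = a - 1 then (1 : ℤ) else 0) with hJ1
  have hblocks : (M.submatrix e e).submatrix π id
      = Matrix.fromBlocks (Matrix.fromBlocks A X 0 J1) 0 C' J1 := by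
    ext p q
    rcases p with (x | y) | z <;> rcases q with (w | v) | u <;>
      simp only [Matrix.submatrix_apply, id_eq, hp1, hp2, hp3,
        Matrix.fromBlocks_apply₁₁, Matrix.fromBlocks_apply₁₂,
        Matrix.fromBlocks_apply₂₁, Matrix.fromBlocks_apply₂₂,
        Matrix.zero_apply, hM, hA, hX, hC, hJ1, Matrix.of_apply, hv1, hv2, hv3]
    · -- (x, u) : zero
      have hx := x.isLt; have hu := u.isLt
      exact cond_zero (K := K) (by omega) (by omega)
    · -- (y, w) : zero
      have hy := y.isLt; have hw := w.isLt
      exact cond_zero (K := K) (by omega) (by omega)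
    · -- (y, v) : J1
      have hy := y.isLt; have hv := v.isLt
      refine cond_iff (K := K) ?_ ?_ ?_ <;> omega
    · -- (y, u) : zero
      have hy := y.isLt; have hu := u.isLt
      exact cond_zero (K := K + 1) (by omega) (by omega)
    · -- (z, u) : J1
      have hz := z.isLt; have hu := u.isLt
      refine cond_iff (K := K) ?_ ?_ ?_ <;> omega
  have hJrev : J1 = (1 : Matrix (Fin a) (Fin a) ℤ).submatrix Fin.revPerm id := by
    ext y z
    rw [Matrix.submatrix_apply, Matrix.one_apply]
    have hy := y.isLt; have hz := z.isLt
    simp only [hJ1, Matrix.of_apply]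
    by_cases hcond : (y : ℕ) + (z : ℕ) = a - 1
    · rw [if_pos hcond, if_pos]
      apply Fin.ext
      simp only [Fin.revPerm_apply, Fin.val_rev, id_eq]
      omega
    · rw [if_neg hcond, if_neg]
      intro hrev
      apply hcond
      have := congrArg Fin.val hrev
      simp only [Fin.revPerm_apply, Fin.val_rev, id_eq] at this
      omega
  have hJdet : J1.det * J1.det = 1 := by
    rcases Int.units_eq_one_or (Equiv.Perm.sign (Fin.revPerm : Equiv.Perm (Fin a))) with hu | hu <;>
      rw [hJrev, Matrix.det_permute, hu] <;> norm_num
  have hAdet : A.det = (-1) ^ c.choose 2 := IH c hclt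
  have hdet1 : M.det = (M.submatrix e e).det := (Matrix.det_submatrix_equiv_self e M).symm
  have hperm := Matrix.det_permute π (M.submatrix e e)
  simp only [Int.cast_id] at hperm
  rw [hblocks, Matrix.det_fromBlocks_zero₁₂, Matrix.det_fromBlocks_zero₂₁] at hperm
  have hs : ((Equiv.Perm.sign π : ℤˣ) : ℤ) * ((Equiv.Perm.sign π : ℤˣ) : ℤ) = 1 := by
    rw [← Units.val_mul, Int.units_mul_self, Units.val_one]
  have hM2 : M.det = ((Equiv.Perm.sign π : ℤˣ) : ℤ) * (A.det * J1.det * J1.det) := by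
    calc M.det = (M.submatrix e e).det := hdet1
      _ = (((Equiv.Perm.sign π : ℤˣ) : ℤ) * ((Equiv.Perm.sign π : ℤˣ) : ℤ))
            * (M.submatrix e e).det := by rw [hs, one_mul]
      _ = ((Equiv.Perm.sign π : ℤˣ) : ℤ)
            * (((Equiv.Perm.sign π : ℤˣ) : ℤ) * (M.submatrix e e).det) := by ring
      _ = ((Equiv.Perm.sign π : ℤˣ) : ℤ) * (A.det * J1.det * J1.det) := by rw [← hperm]
  rw [hM2, hsign, hAdet]
  have hfin : (-1 : ℤ) ^ a * ((-1) ^ c.choose 2 * J1.det * J1.det) = (-1) ^ n.choose 2 := by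
    rw [mul_assoc ((-1 : ℤ) ^ c.choose 2), hJdet, mul_one]
    rw [show n = b + a by omega, show c = b - a from hc, par_lemma b a hab]
    ring
  exact hfin

open Classical in
private lemma hankel_key (n : ℕ) :
    (Matrix.of fun i j : Fin n =>
      if ∃ k : ℕ, (i : ℕ) + (j : ℕ) + 1 = 2 ^ k then (1 : ℤ) else 0).det
      = (-1) ^ n.choose 2 := by
  induction n using Nat.strong_induction_on with
  | _ n IH =>
    rcases Nat.lt_or_ge n 2 with h | h
    · interval_cases n
      · simp
      · rw [show ((1:ℕ).choose 2) = 0 from rfl, pow_zero, Matrix.det_fin_one,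
          Matrix.of_apply, if_pos ⟨0, by simp⟩]
    · exact hankel_step n h IH


open Classical in
/-- The determinant of the `n×n` Hankel matrix of the sequence `μ_m = 1` iff `m+1` is a power
of `2` (and `0` otherwise) equals `(-1)^(binom(n,2))`. -/
theorem hankel_det (n : ℕ) (hn : 1 ≤ n) :
    Matrix.det (Matrix.of fun i j : Fin n =>
        if ∃ k : ℕ, (i : ℕ) + (j : ℕ) + 1 = 2 ^ k then (1 : ℤ) else 0) =
      (-1) ^ n.choose 2 := hankel_key n
end
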